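/- arXiv:1912.00878 — 6 statements merged into one kernel-verified Lean document; each statement's English description precedes it below -/
import Mathlib

section
/- The set S = {λ ∈ ℂ : λ e^{λ} = 1} is countably infinite, every element of S is a simple zero of the entire function λ e^{λ} − 1, and S contains exactly one real number (the Omega constant). Moreover, there is a bijective enumeration (λ_k)_{k∈ℤ} of S such that Im λ_k < Im λ_{k+1} for all k, λ₀ is the real element, λ_{−k} is the complex conjugate of λ_k for all k, and there exist constants 0 < c ≤ C and an integer K ≥ 2 such that for all |k| ≥ K: c·ln|k| ≤ −Re λ_k ≤ C·ln|k|, c·|k| ≤ |λ_k| ≤ C·|k|, c ≤ |λ_{k+1} − λ_k| ≤ C, and |conj(λ_k) + λ_{k+1}| ≥ c. -/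
/-!
Write `λ = x + i y` with `y > 0`. Separating real and imaginary parts, `λ e^λ = 1` says
`e^x y = -sin y` and `x = -y cot y`; so `sin y < 0`, `x = log (-sin y / y)`, and `y` is a
zero of `imRootFun y = log y - log (-sin y) - y cot y`. The set where `sin < 0` is the union
of the strips `(2πn - π, 2πn)`; for `n ≥ 1` the function `imRootFun` is strictly increasing
there (its derivative is `1/y + (y - sin 2y)/sin² y > 0` once `y > 1`) and changes sign on
`[2πn - 3π/4, 2πn - π/2]`, so each such strip carries exactly one root `λ_n`. Conjugation
supplies the roots in the lower half-plane, and the real root is the unique zero of the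
increasing function `x - e^{-x}`. All the asymptotic bounds follow from
`Im λ_n = 2πn + O(1)` and `-sin (Im λ_n) ∈ [1/2, 1]`, which give
`-Re λ_n = log (Im λ_n) + O(1)`.
-/

open Real Set

namespace LambertRoots

theorem sin_neg_iff_exists_mem_Ioo {y : ℝ} :
    sin y < 0 ↔ ∃ n : ℤ, y ∈ Ioo (2 * π * n - π) (2 * π * n) := by
  constructor
  · intro hy
    set t := toIcoMod two_pi_pos (-π) y
    set n := toIcoDiv two_pi_pos (-π) y
    have hyt : y = t + n * (2 * π) := by
      rw [← zsmul_eq_mul]; exact (toIcoMod_add_toIcoDiv_zsmul _ _ _).symm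
    obtain ⟨ht₁, ht₂⟩ := toIcoMod_mem_Ico two_pi_pos (-π) y
    have hsin : sin t < 0 := by rwa [hyt, sin_add_int_mul_two_pi] at hy
    have ht_ne : t ≠ -π := by rintro h; simp [h] at hsin
    have ht₀ : t < 0 := by
      by_contra! h
      exact hsin.not_ge (sin_nonneg_of_nonneg_of_le_pi h (by linarith))
    exact ⟨n, by constructor <;> linarith [lt_of_le_of_ne ht₁ (Ne.symm ht_ne)]⟩
  · rintro ⟨n, h₁, h₂⟩
    rw [← sin_sub_int_mul_two_pi y n]
    exact sin_neg_of_neg_of_neg_pi_lt (by linarith) (by linarith)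

noncomputable def imRootFun (y : ℝ) : ℝ := log y - log (-sin y) - y * cos y / sin y

theorem hasDerivAt_imRootFun {y : ℝ} (hy : y ≠ 0) (hs : sin y ≠ 0) :
    HasDerivAt imRootFun (1 / y + (y - 2 * sin y * cos y) / sin y ^ 2) y := by
  have hlog_sin : HasDerivAt (fun t => log (-sin t)) (-cos y / -sin y) y :=
    (hasDerivAt_sin y).neg.log (neg_ne_zero.2 hs)
  have hcot : HasDerivAt (fun t => t * cos t / sin t)
      (((1 * cos y + y * -sin y) * sin y - y * cos y * cos y) / sin y ^ 2) y :=
    ((hasDerivAt_id' y).mul (hasDerivAt_cos y)).div (hasDerivAt_sin y) hs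
  refine (((hasDerivAt_log hy).sub hlog_sin).sub hcot).congr_deriv ?_
  field_simp
  linear_combination y ^ 2 * sin_sq_add_cos_sq y

theorem strictMonoOn_imRootFun {a b : ℝ} (ha : 1 ≤ a) (hsin : ∀ y ∈ Ioo a b, sin y ≠ 0) :
    StrictMonoOn imRootFun (Ioo a b) := by
  have hderiv : ∀ y ∈ Ioo a b,
      HasDerivAt imRootFun (1 / y + (y - 2 * sin y * cos y) / sin y ^ 2) y := fun y hy =>
    hasDerivAt_imRootFun (by linarith [hy.1]) (hsin y hy)
  refine strictMonoOn_of_deriv_pos (convex_Ioo a b)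
    (fun y hy => (hderiv y hy).continuousAt.continuousWithinAt) fun y hy => ?_
  rw [interior_Ioo] at hy
  rw [(hderiv y hy).deriv]
  have : 2 * sin y * cos y ≤ 1 := by
    nlinarith [sin_sq_add_cos_sq y, sq_nonneg (sin y - cos y)]
  have : 0 < (y - 2 * sin y * cos y) / sin y ^ 2 :=
    div_pos (by linarith [hy.1]) (by positivity [hsin y hy])
  have : 0 < 1 / y := one_div_pos.2 (by linarith [hy.1])
  positivity

theorem half_le_neg_sin {n : ℤ} {y : ℝ}
    (hy : y ∈ Icc (2 * π * n - 3 * π / 4) (2 * π * n - π / 2)) : 1 / 2 ≤ -sin y := by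
  obtain ⟨h₁, h₂⟩ := hy
  have hcos : cos (π / 3) ≤ cos (-(y - n * (2 * π) + π / 2)) :=
    cos_le_cos_of_nonneg_of_le_pi (by linarith) (by linarith) (by linarith)
  rwa [cos_pi_div_three, cos_neg, cos_add_pi_div_two, sin_sub_int_mul_two_pi] at hcos

theorem exists_imRootFun_eq_zero {n : ℤ} (hn : 0 < n) :
    ∃ y ∈ Icc (2 * π * n - 3 * π / 4) (2 * π * n - π / 2), imRootFun y = 0 := by
  have hn' : (1 : ℝ) ≤ n := by exact_mod_cast hn
  have hpi := pi_gt_three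
  set a := 2 * π * n - 3 * π / 4 with ha_def
  set b := 2 * π * n - π / 2 with hb_def
  have ha_pos : 1 < a := by nlinarith
  have ha : a ∈ Icc a b := ⟨le_rfl, by linarith⟩
  have hFa : imRootFun a ≤ 0 := by
    have hsc : sin a = cos a := by
      have : a = π / 4 - π + n * (2 * π) := by ring
      rw [this, sin_add_int_mul_two_pi, cos_add_int_mul_two_pi, sin_sub_pi, cos_sub_pi,
        sin_pi_div_four, cos_pi_div_four]
    have hsin := half_le_neg_sin ha
    have hlog : log (1 / 2) ≤ log (-sin a) := log_le_log (by norm_num) hsin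
    rw [one_div, log_inv] at hlog
    have : a * cos a / sin a = a := by rw [← hsc]; field_simp [show sin a ≠ 0 by linarith]
    rw [imRootFun, this]
    linarith [log_le_sub_one_of_pos (show 0 < a by linarith), log_two_lt_d9]
  have hFb : 0 ≤ imRootFun b := by
    have hb : b = -(π / 2) + n * (2 * π) := by ring
    rw [imRootFun, hb, sin_add_int_mul_two_pi, cos_add_int_mul_two_pi, ← hb]
    simp only [sin_neg, sin_pi_div_two, cos_neg, cos_pi_div_two, neg_neg, log_one]
    simpa using log_nonneg (show 1 ≤ b by nlinarith)
  have hcont : ContinuousOn imRootFun (Icc a b) := fun y hy =>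
    (hasDerivAt_imRootFun (by linarith [hy.1])
      (by linarith [half_le_neg_sin hy])).continuousAt.continuousWithinAt
  exact intermediate_value_Icc ha.2 hcont ⟨hFa, hFb⟩

noncomputable def imRoot (n : ℤ) : ℝ :=
  if hn : 0 < n then (exists_imRootFun_eq_zero hn).choose else 0

theorem imRoot_mem_Icc {n : ℤ} (hn : 0 < n) :
    imRoot n ∈ Icc (2 * π * n - 3 * π / 4) (2 * π * n - π / 2) := by
  rw [imRoot, dif_pos hn]; exact (exists_imRootFun_eq_zero hn).choose_spec.1

theorem imRootFun_imRoot {n : ℤ} (hn : 0 < n) : imRootFun (imRoot n) = 0 := by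
  rw [imRoot, dif_pos hn]; exact (exists_imRootFun_eq_zero hn).choose_spec.2

theorem eq_imRoot_of_imRootFun_eq_zero {n : ℤ} (hn : 0 < n) {y : ℝ}
    (hy : y ∈ Ioo (2 * π * n - π) (2 * π * n)) (hF : imRootFun y = 0) : y = imRoot n := by
  have hn' : (1 : ℝ) ≤ n := by exact_mod_cast hn
  have hpi := pi_gt_three
  have hmono := strictMonoOn_imRootFun (a := 2 * π * n - π) (b := 2 * π * n) (by nlinarith)
    fun z hz => (sin_neg_iff_exists_mem_Ioo.2 ⟨n, hz⟩).ne
  obtain ⟨h₁, h₂⟩ := imRoot_mem_Icc hn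
  exact hmono.injOn hy ⟨by linarith, by linarith⟩ (by rw [hF, imRootFun_imRoot hn])

theorem mul_exp_eq_one_iff {x : ℝ} : x * exp x = 1 ↔ x - exp (-x) = 0 := by
  rw [exp_neg, sub_eq_zero, mul_eq_one_iff_eq_inv₀ (exp_pos x).ne']

theorem exists_unique_mul_exp_eq_one : ∃! x : ℝ, x * exp x = 1 := by
  simp only [mul_exp_eq_one_iff]
  have hmono : StrictMono fun x : ℝ => x - exp (-x) := fun a b hab => by
    linarith [exp_lt_exp.2 (neg_lt_neg hab)]
  obtain ⟨x, -, hx⟩ : ∃ x ∈ Icc (0 : ℝ) 1, x - exp (-x) = 0 := by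
    refine intermediate_value_Icc zero_le_one (by fun_prop) ⟨?_, ?_⟩
    · simp
    · simp [exp_le_one_iff.2 (by norm_num : (-1 : ℝ) ≤ 0)]
  exact ⟨x, hx, fun y hy => hmono.injective (hy.trans hx.symm)⟩

noncomputable def omegaConst : ℝ := exists_unique_mul_exp_eq_one.exists.choose

theorem omegaConst_mul_exp : omegaConst * exp omegaConst = 1 :=
  exists_unique_mul_exp_eq_one.exists.choose_spec

def rootSet : Set ℂ := {z | z * Complex.exp z = 1}

theorem mem_rootSet {z : ℂ} : z ∈ rootSet ↔ z * Complex.exp z = 1 := Iff.rfl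

theorem ofReal_mem_rootSet_iff (x : ℝ) : (x : ℂ) ∈ rootSet ↔ x * exp x = 1 := by
  rw [mem_rootSet, ← Complex.ofReal_exp]
  exact_mod_cast Iff.rfl

theorem conj_mem_rootSet {z : ℂ} (hz : z ∈ rootSet) : starRingEnd ℂ z ∈ rootSet := by
  rw [mem_rootSet, Complex.exp_conj, ← map_mul, mem_rootSet.1 hz, map_one]

theorem deriv_mul_exp_sub_one_ne_zero {z : ℂ} (hz : z ∈ rootSet) :
    deriv (fun z : ℂ => z * Complex.exp z - 1) z ≠ 0 := by
  have hderiv : HasDerivAt (fun z : ℂ => z * Complex.exp z - 1) ((1 + z) * Complex.exp z) z := by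
    simpa [add_mul] using ((hasDerivAt_id z).mul (Complex.hasDerivAt_exp z)).sub_const 1
  rw [hderiv.deriv]
  refine mul_ne_zero (fun h => ?_) (Complex.exp_ne_zero z)
  rw [show z = ((-1 : ℝ) : ℂ) by push_cast; linear_combination h, ofReal_mem_rootSet_iff] at hz
  linarith [exp_pos (-1)]

theorem mem_rootSet_iff_re_im {z : ℂ} (hz : z.im ≠ 0) :
    z ∈ rootSet ↔
      sin z.im = -(exp z.re * z.im) ∧ z.re * sin z.im + z.im * cos z.im = 0 := by
  obtain ⟨x, y⟩ := z
  simp only at hz ⊢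
  have hE := exp_pos x
  have hpyth := sin_sq_add_cos_sq y
  simp only [mem_rootSet, Complex.ext_iff, Complex.mul_re, Complex.mul_im,
    Complex.exp_re, Complex.exp_im, Complex.one_re, Complex.one_im]
  constructor
  · rintro ⟨hre, him⟩
    have him' : x * sin y + y * cos y = 0 := by
      refine (mul_eq_zero.1 ?_).resolve_left hE.ne'
      linear_combination him
    exact ⟨by linear_combination (-sin y) * hre + exp x * (cos y * him' - y * hpyth), him'⟩
  · rintro ⟨hsin, him⟩
    have hs : sin y ≠ 0 := by
      rw [hsin]; exact neg_ne_zero.2 (mul_ne_zero hE.ne' hz)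
    refine ⟨mul_left_cancel₀ hs ?_, by linear_combination exp x * him⟩
    linear_combination exp x * (cos y * him - y * hpyth) - hsin

theorem mem_rootSet_iff_of_im_pos {z : ℂ} (hz : 0 < z.im) :
    z ∈ rootSet ↔ sin z.im < 0 ∧ z.re = log (-sin z.im / z.im) ∧ imRootFun z.im = 0 := by
  rw [mem_rootSet_iff_re_im hz.ne']
  obtain ⟨x, y⟩ := z
  simp only at hz ⊢
  constructor
  · rintro ⟨hsin, him⟩
    have hE := exp_pos x
    have hs : sin y < 0 := by rw [hsin]; exact neg_neg_of_pos (mul_pos hE hz)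
    have hlog : log (-sin y) = x + log y := by
      rw [hsin, neg_neg, log_mul hE.ne' hz.ne', log_exp]
    have hcot : y * cos y / sin y = -x := by
      rw [div_eq_iff hs.ne]; linear_combination him
    refine ⟨hs, ?_, ?_⟩
    · rw [hsin, neg_neg, mul_div_cancel_right₀ _ hz.ne', log_exp]
    · rw [imRootFun, hlog, hcot]; ring
  · rintro ⟨hs, hx, hF⟩
    have hE : exp x = -sin y / y := by rw [hx, exp_log (div_pos (neg_pos.2 hs) hz)]
    have hx' : x = log (-sin y) - log y := by rw [hx, log_div (neg_pos.2 hs).ne' hz.ne']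
    have hcot : y * cos y / sin y = -x := by rw [imRootFun] at hF; linarith
    rw [div_eq_iff hs.ne] at hcot
    exact ⟨by rw [hE]; field_simp, by linear_combination hcot⟩

theorem imRoot_pos {n : ℤ} (hn : 0 < n) : 0 < imRoot n := by
  have hn' : (1 : ℝ) ≤ n := by exact_mod_cast hn
  nlinarith [(imRoot_mem_Icc hn).1, pi_gt_three]

theorem imRoot_lt_imRoot_add_one {n : ℤ} (hn : 0 < n) : imRoot n < imRoot (n + 1) := by
  have h₁ := (imRoot_mem_Icc hn).2
  have h₂ := (imRoot_mem_Icc (n := n + 1) (by omega)).1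
  push_cast at h₂
  nlinarith [pi_pos]

theorem sin_imRoot_neg {n : ℤ} (hn : 0 < n) : sin (imRoot n) < 0 := by
  linarith [half_le_neg_sin (imRoot_mem_Icc hn)]

noncomputable def reRoot (n : ℤ) : ℝ := log (-sin (imRoot n) / imRoot n)

theorem mk_mem_rootSet {n : ℤ} (hn : 0 < n) : (⟨reRoot n, imRoot n⟩ : ℂ) ∈ rootSet :=
  (mem_rootSet_iff_of_im_pos (imRoot_pos hn)).2 ⟨sin_imRoot_neg hn, rfl, imRootFun_imRoot hn⟩

theorem exists_eq_mk_of_im_pos {z : ℂ} (hz : z ∈ rootSet) (him : 0 < z.im) :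
    ∃ n : ℤ, 0 < n ∧ z = ⟨reRoot n, imRoot n⟩ := by
  obtain ⟨hs, hre, hF⟩ := (mem_rootSet_iff_of_im_pos him).1 hz
  obtain ⟨n, hstrip⟩ := sin_neg_iff_exists_mem_Ioo.1 hs
  have hn : 0 < n := by
    have : (0 : ℝ) < n := by nlinarith [hstrip.2, pi_pos]
    exact_mod_cast this
  have him_eq := eq_imRoot_of_imRootFun_eq_zero hn hstrip hF
  exact ⟨n, hn, Complex.ext (by rw [hre, reRoot, him_eq]) him_eq⟩

noncomputable def lam (k : ℤ) : ℂ :=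
  if 0 < k then ⟨reRoot k, imRoot k⟩
  else if k = 0 then omegaConst
  else starRingEnd ℂ ⟨reRoot (-k), imRoot (-k)⟩

theorem lam_of_pos {k : ℤ} (hk : 0 < k) : lam k = ⟨reRoot k, imRoot k⟩ := if_pos hk

theorem lam_zero : lam 0 = omegaConst := rfl

theorem lam_neg (k : ℤ) : lam (-k) = starRingEnd ℂ (lam k) := by
  rcases lt_trichotomy k 0 with hk | rfl | hk
  · rw [lam_of_pos (neg_pos.2 hk), lam, if_neg hk.not_gt, if_neg hk.ne, Complex.conj_conj]
  · rw [neg_zero, lam_zero, Complex.conj_ofReal]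
  · rw [lam_of_pos hk, lam, if_neg (by omega), if_neg (by omega), neg_neg]

theorem lam_mem_rootSet (k : ℤ) : lam k ∈ rootSet := by
  rcases lt_trichotomy k 0 with hk | rfl | hk
  · rw [← neg_neg k, lam_neg]
    exact conj_mem_rootSet (lam_of_pos (neg_pos.2 hk) ▸ mk_mem_rootSet (neg_pos.2 hk))
  · exact (ofReal_mem_rootSet_iff _).2 omegaConst_mul_exp
  · exact lam_of_pos hk ▸ mk_mem_rootSet hk

theorem range_lam : range lam = rootSet := by
  refine Subset.antisymm (range_subset_iff.2 lam_mem_rootSet) fun z hz => ?_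
  rcases lt_trichotomy z.im 0 with him | him | him
  · obtain ⟨n, hn, hzn⟩ := exists_eq_mk_of_im_pos (conj_mem_rootSet hz)
      (by simpa using him)
    refine ⟨-n, ?_⟩
    rw [lam_neg, lam_of_pos hn, ← hzn, Complex.conj_conj]
  · have hreal : z = (z.re : ℂ) := Complex.ext rfl (by simpa using him)
    rw [hreal, ofReal_mem_rootSet_iff] at hz
    refine ⟨0, ?_⟩
    rw [hreal, lam_zero, exists_unique_mul_exp_eq_one.unique omegaConst_mul_exp hz]
  · obtain ⟨n, hn, hzn⟩ := exists_eq_mk_of_im_pos hz him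
    exact ⟨n, by rw [lam_of_pos hn, hzn]⟩

theorem im_lam_lt_im_lam_add_one_of_nonneg {k : ℤ} (hk : 0 ≤ k) :
    (lam k).im < (lam (k + 1)).im := by
  rcases hk.eq_or_lt with rfl | hk
  · simpa [lam_zero, lam_of_pos] using imRoot_pos one_pos
  · simpa [lam_of_pos hk, lam_of_pos (by omega : 0 < k + 1)] using imRoot_lt_imRoot_add_one hk

theorem strictMono_im_lam : StrictMono fun k => (lam k).im := by
  refine strictMono_int_of_lt_succ fun k => ?_
  rcases le_or_gt 0 k with hk | hk
  · exact im_lam_lt_im_lam_add_one_of_nonneg hk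
  · obtain ⟨j, hj, rfl⟩ : ∃ j, 0 ≤ j ∧ k = -(j + 1) := ⟨-k - 1, by omega, by ring⟩
    rw [show -(j + 1) + 1 = -j by ring, lam_neg, lam_neg, Complex.conj_im, Complex.conj_im,
      neg_lt_neg_iff]
    exact im_lam_lt_im_lam_add_one_of_nonneg hj

theorem lam_injective : Function.Injective lam :=
  strictMono_im_lam.injective.of_comp

theorem neg_reRoot_mem_Icc {n : ℤ} (hn : 0 < n) :
    -reRoot n ∈ Icc (log (imRoot n)) (log (imRoot n) + log 2) := by
  have hs := half_le_neg_sin (imRoot_mem_Icc hn)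
  have hlog₁ : log (1 / 2) ≤ log (-sin (imRoot n)) := log_le_log (by norm_num) hs
  have hlog₂ : log (-sin (imRoot n)) ≤ 0 :=
    log_nonpos (by linarith) (by linarith [neg_one_le_sin (imRoot n)])
  rw [one_div, log_inv] at hlog₁
  rw [reRoot, log_div (by linarith) (imRoot_pos hn).ne']
  constructor <;> linarith

theorem imRoot_mem_Icc_mul {n : ℤ} (hn : 0 < n) : imRoot n ∈ Icc (n : ℝ) (7 * n) := by
  have hn' : (1 : ℝ) ≤ n := by exact_mod_cast hn
  obtain ⟨h₁, h₂⟩ := imRoot_mem_Icc hn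
  constructor <;> nlinarith [pi_gt_three, pi_lt_d2]

theorem neg_reRoot_mem_Icc_log {n : ℤ} (hn : 3 ≤ n) :
    -reRoot n ∈ Icc (log n) (4 * log n) := by
  have hn' : (3 : ℝ) ≤ n := by exact_mod_cast hn
  obtain ⟨hY₁, hY₂⟩ := imRoot_mem_Icc_mul (n := n) (by omega)
  obtain ⟨hX₁, hX₂⟩ := neg_reRoot_mem_Icc (n := n) (by omega)
  have hcube : log (imRoot n) ≤ 3 * log n := by
    have hsq : (9 : ℝ) ≤ n ^ 2 := by nlinarith
    have h := log_le_log (by linarith) (show imRoot n ≤ (n : ℝ) ^ 3 by nlinarith)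
    rwa [log_pow, Nat.cast_ofNat] at h
  have hlog2 : log 2 ≤ log n := log_le_log (by norm_num) (by linarith)
  exact ⟨(log_le_log (by linarith) hY₁).trans hX₁, by linarith⟩

theorem norm_lam_mem_Icc {k : ℤ} (hk : 3 ≤ k) : ‖lam k‖ ∈ Icc (k : ℝ) (11 * k) := by
  have hk' : (3 : ℝ) ≤ k := by exact_mod_cast hk
  obtain ⟨hY₁, hY₂⟩ := imRoot_mem_Icc_mul (n := k) (by omega)
  obtain ⟨hX₁, hX₂⟩ := neg_reRoot_mem_Icc_log hk
  have hlog : 0 ≤ log k := log_nonneg (by linarith)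
  have hre : |(lam k).re| = -reRoot k := by
    rw [lam_of_pos (by omega), abs_of_nonpos (by linarith)]
  have him : |(lam k).im| = imRoot k := by
    rw [lam_of_pos (by omega), abs_of_pos (by linarith)]
  constructor
  · exact hY₁.trans (him ▸ Complex.abs_im_le_norm _)
  · linarith [Complex.norm_le_abs_re_add_abs_im (lam k), log_le_self (x := k) (by linarith)]

theorem imRoot_add_one_sub_mem_Icc {n : ℤ} (hn : 0 < n) :
    imRoot (n + 1) - imRoot n ∈ Icc 5 8 := by
  obtain ⟨h₁, h₂⟩ := imRoot_mem_Icc hn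
  obtain ⟨h₃, h₄⟩ := imRoot_mem_Icc (n := n + 1) (by omega)
  push_cast at h₃ h₄
  constructor <;> nlinarith [pi_gt_three, pi_lt_d2]

theorem abs_reRoot_add_one_sub_le {n : ℤ} (hn : 2 ≤ n) : |reRoot (n + 1) - reRoot n| ≤ 2 := by
  have hn' : (2 : ℝ) ≤ n := by exact_mod_cast hn
  obtain ⟨hX₁, hX₂⟩ := neg_reRoot_mem_Icc (n := n) (by omega)
  obtain ⟨hX₃, hX₄⟩ := neg_reRoot_mem_Icc (n := n + 1) (by omega)
  have hpos := imRoot_pos (n := n) (by omega)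
  have hmono := imRoot_lt_imRoot_add_one (n := n) (by omega)
  have hdouble : imRoot (n + 1) ≤ 2 * imRoot n := by
    obtain ⟨h₁, h₂⟩ := imRoot_mem_Icc (n := n) (by omega)
    obtain ⟨h₃, h₄⟩ := imRoot_mem_Icc (n := n + 1) (by omega)
    push_cast at h₃ h₄
    nlinarith [pi_pos]
  have hlog₁ := log_le_log hpos hmono.le
  have hlog₂ := log_le_log (by linarith) hdouble
  rw [log_mul two_ne_zero hpos.ne'] at hlog₂
  rw [abs_le]
  constructor <;> linarith [log_two_lt_d9]

theorem lam_gap_bounds_of_two_le {k : ℤ} (hk : 2 ≤ k) :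
    (1 ≤ ‖lam (k + 1) - lam k‖ ∧ ‖lam (k + 1) - lam k‖ ≤ 10) ∧
      1 ≤ ‖starRingEnd ℂ (lam k) + lam (k + 1)‖ := by
  obtain ⟨hY₁, hY₂⟩ := imRoot_add_one_sub_mem_Icc (n := k) (by omega)
  have hX := abs_reRoot_add_one_sub_le hk
  have hsub : lam (k + 1) - lam k = ⟨reRoot (k + 1) - reRoot k, imRoot (k + 1) - imRoot k⟩ := by
    rw [lam_of_pos (by omega), lam_of_pos (by omega)]; rfl
  have hadd : starRingEnd ℂ (lam k) + lam (k + 1) =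
      ⟨reRoot k + reRoot (k + 1), imRoot (k + 1) - imRoot k⟩ := by
    rw [lam_of_pos (by omega), lam_of_pos (by omega)]
    exact Complex.ext (by simp) (by simp; ring)
  have hlower : ∀ x : ℝ, 1 ≤ ‖(⟨x, imRoot (k + 1) - imRoot k⟩ : ℂ)‖ := fun x =>
    le_trans (by rw [abs_of_pos (by linarith)]; linarith) (Complex.abs_im_le_norm ⟨x, _⟩)
  refine ⟨⟨hsub ▸ hlower _, ?_⟩, hadd ▸ hlower _⟩
  rw [hsub]
  refine (Complex.norm_le_abs_re_add_abs_im _).trans ?_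
  rw [abs_of_pos (show 0 < imRoot (k + 1) - imRoot k by linarith)]
  linarith

theorem re_lam_abs (k : ℤ) : (lam |k|).re = (lam k).re := by
  rcases abs_choice k with h | h <;> rw [h]
  rw [lam_neg, Complex.conj_re]

theorem norm_lam_abs (k : ℤ) : ‖lam |k|‖ = ‖lam k‖ := by
  rcases abs_choice k with h | h <;> rw [h]
  rw [lam_neg, Complex.norm_conj]

theorem lam_size_bounds_of_three_le_abs {k : ℤ} (hk : 3 ≤ |k|) :
    (log (|k| : ℤ) ≤ -(lam k).re ∧ -(lam k).re ≤ 4 * log (|k| : ℤ)) ∧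
      (((|k| : ℤ) : ℝ) ≤ ‖lam k‖ ∧ ‖lam k‖ ≤ 11 * ((|k| : ℤ) : ℝ)) := by
  have hre : (lam |k|).re = reRoot |k| := by rw [lam_of_pos (by omega)]
  rw [← re_lam_abs, ← norm_lam_abs, hre]
  exact ⟨neg_reRoot_mem_Icc_log hk, norm_lam_mem_Icc hk⟩

theorem lam_gap_bounds_of_three_le_abs {k : ℤ} (hk : 3 ≤ |k|) :
    (1 ≤ ‖lam (k + 1) - lam k‖ ∧ ‖lam (k + 1) - lam k‖ ≤ 10) ∧
      1 ≤ ‖starRingEnd ℂ (lam k) + lam (k + 1)‖ := by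
  rcases le_or_gt 0 k with h | h
  · exact lam_gap_bounds_of_two_le (by rw [abs_of_nonneg h] at hk; omega)
  · obtain ⟨j, hj, rfl⟩ : ∃ j, 2 ≤ j ∧ k = -(j + 1) :=
      ⟨-k - 1, by rw [abs_of_neg h] at hk; omega, by ring⟩
    rw [show -(j + 1) + 1 = -j by ring, lam_neg, lam_neg, ← map_sub, Complex.norm_conj,
      norm_sub_rev, Complex.conj_conj, add_comm (lam (j + 1))]
    exact lam_gap_bounds_of_two_le hj

end LambertRoots

open LambertRoots in
theorem stmt5 :
    let S : Set ℂ := {lam : ℂ | lam * Complex.exp lam = 1}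
    -- `S` is countably infinite
    S.Countable ∧ S.Infinite ∧
    -- every element of `S` is a simple zero of `λ ↦ λ e^λ - 1`
    (∀ lam ∈ S, deriv (fun z : ℂ => z * Complex.exp z - 1) lam ≠ 0) ∧
    -- `S` contains exactly one real number
    (∃! x : ℝ, ((x : ℂ) ∈ S)) ∧
    -- and there is a bijective enumeration with the stated properties
    ∃ l : ℤ → ℂ,
      Function.Injective l ∧ Set.range l = S ∧
      StrictMono (fun k : ℤ => (l k).im) ∧
      (l 0).im = 0 ∧
      (∀ k : ℤ, l (-k) = (starRingEnd ℂ) (l k)) ∧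
      ∃ (c C : ℝ) (K : ℤ), 0 < c ∧ c ≤ C ∧ 2 ≤ K ∧
        ∀ k : ℤ, K ≤ |k| →
          (c * Real.log (|k| : ℤ) ≤ -(l k).re ∧ -(l k).re ≤ C * Real.log (|k| : ℤ)) ∧
          (c * ((|k| : ℤ) : ℝ) ≤ ‖l k‖ ∧ ‖l k‖ ≤ C * ((|k| : ℤ) : ℝ)) ∧
          (c ≤ ‖l (k + 1) - l k‖ ∧ ‖l (k + 1) - l k‖ ≤ C) ∧
          c ≤ ‖(starRingEnd ℂ) (l k) + l (k + 1)‖ := by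
  intro S
  rw [show S = rootSet from rfl]
  refine ⟨range_lam ▸ countable_range lam,
    range_lam ▸ infinite_range_of_injective lam_injective, fun z hz => deriv_mul_exp_sub_one_ne_zero hz,
    by simpa only [ofReal_mem_rootSet_iff] using exists_unique_mul_exp_eq_one,
    lam, lam_injective, range_lam, strictMono_im_lam, by simp [lam_zero], lam_neg,
    1, 11, 3, one_pos, by norm_num, by norm_num, fun k hk => ?_⟩
  obtain ⟨⟨hre₁, hre₂⟩, hnorm₁, hnorm₂⟩ := lam_size_bounds_of_three_le_abs hk
  obtain ⟨⟨hgap₁, hgap₂⟩, hconj⟩ := lam_gap_bounds_of_three_le_abs hk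
  have hlog : 0 ≤ Real.log (|k| : ℤ) := log_nonneg (by exact_mod_cast (by omega : 1 ≤ |k|))
  exact ⟨⟨by linarith, by linarith⟩, ⟨by linarith, hnorm₂⟩, ⟨hgap₁, by linarith⟩, hconj⟩
end

section
/- Let T > 1 and let λ, μ, ν ∈ ℂ be solutions of w e^{w} = 1 with μ ≠ ν. Set μ̃ = e^{−μ(T−1)}, ν̃ = e^{−ν(T−1)}, and assume μ̃ ≠ ν̃. Let a = 1 + 1/μ, β₁ = −μ̃/((ν̃ − μ̃)·a), β₂ = μ̃·ν̃/((ν̃ − μ̃)·a), and define g : [0,T] → ℂ by g(t) = β₁·(e^{−μ t} − e^{−ν t}) for t ∈ [0,1], plus β₂·(e^{−μ(t−T+1)} − e^{−ν(t−T+1)}) for t ∈ [T−1, T], and 0 elsewhere (the two pieces being added where the intervals overlap). Then ∫₀^T e^{λ t} g(t) dt = 1 if λ = μ, and ∫₀^T e^{λ t} g(t) dt = 0 if λ ≠ μ. -/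
/-!
Write `φ(t) = e^{-μt} - e^{-νt}`. Both pieces of `g` are multiples of `φ`, the second one shifted
by `T - 1`, so `∫₀ᵀ e^{λt} g = (β₁ + e^{λ(T-1)} β₂) · ∫₀¹ e^{λt} φ`. For distinct roots `λ ≠ κ`
of `w e^w = 1` one has `∫₀¹ e^{(λ-κ)t} dt = -1/λ`, so `∫₀¹ e^{λt} φ` vanishes unless `λ ∈ {μ, ν}`
and equals `1 + 1/μ = a` at `λ = μ`. The coefficient is `1/a` at `λ = μ` (as `e^{μ(T-1)} = 1/μ̃`)
and `0` at `λ = ν` (as `e^{ν(T-1)} = 1/ν̃`).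
-/

open Set MeasureTheory Complex

noncomputable section

theorem intervalIntegral.integral_indicator_Icc {E : Type*} [NormedAddCommGroup E]
    [NormedSpace ℝ E] {a b c d : ℝ} (hac : a ≤ c) (hcd : c ≤ d) (hdb : d ≤ b) (f : ℝ → E) :
    ∫ t in a..b, (Icc c d).indicator f t = ∫ t in c..d, f t := by
  have hae : (Icc c d).indicator f =ᵐ[volume] (Ioc c d).indicator f :=
    indicator_ae_eq_of_ae_eq_set Ioc_ae_eq_Icc.symm
  rw [integral_of_le (hac.trans (hcd.trans hdb)),
    MeasureTheory.integral_congr_ae (ae_restrict_of_ae hae),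
    MeasureTheory.integral_indicator measurableSet_Ioc,
    Measure.restrict_restrict measurableSet_Ioc,
    inter_eq_left.mpr (Ioc_subset_Ioc hac hdb), ← integral_of_le hcd]

theorem ne_neg_one_of_mul_exp_eq_one {w : ℂ} (hw : w * exp w = 1) : w ≠ -1 := by
  rintro rfl
  have h : exp (-1) = -1 := by linear_combination -hw
  rw [← ofReal_one, ← ofReal_neg, ← ofReal_exp] at h
  linarith [Real.exp_pos (-1), ofReal_injective h]

/-- Since `e^{λ-μ} = μ/λ`, the integral is `(μ/λ - 1)/(λ - μ)`, which no longer depends on `μ`. -/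
theorem integral_exp_sub_mul_of_mul_exp_eq_one {lam mu : ℂ} (hlam : lam * exp lam = 1)
    (hmu : mu * exp mu = 1) (hne : lam ≠ mu) :
    ∫ t in (0:ℝ)..1, exp ((lam - mu) * t) = -lam⁻¹ := by
  have hlam0 : lam ≠ 0 := by rintro rfl; simp at hlam
  have hmu0 : mu ≠ 0 := by rintro rfl; simp at hmu
  have hsub : lam - mu ≠ 0 := sub_ne_zero.2 hne
  have hexp : exp (lam - mu) = mu / lam := by
    rw [exp_sub, div_eq_div_iff (exp_ne_zero mu) hlam0]
    linear_combination hlam - hmu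
  rw [integral_exp_mul_complex hsub]
  simp only [ofReal_one, ofReal_zero, mul_one, mul_zero, exp_zero, hexp]
  field_simp
  ring

theorem integral_exp_mul_exp_sub_exp (lam mu nu : ℂ) :
    ∫ t in (0:ℝ)..1, exp (lam * t) * (exp (-(mu * t)) - exp (-(nu * t)))
      = (∫ t in (0:ℝ)..1, exp ((lam - mu) * t)) - ∫ t in (0:ℝ)..1, exp ((lam - nu) * t) := by
  rw [← intervalIntegral.integral_sub (Continuous.intervalIntegrable (by fun_prop) _ _)
    (Continuous.intervalIntegrable (by fun_prop) _ _)]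
  congr 1 with t
  rw [mul_sub, ← exp_add, ← exp_add]
  ring_nf

theorem integral_exp_mul_comp_sub (lam : ℂ) {v : ℝ → ℂ} (c d : ℝ) :
    ∫ t in c..d, exp (lam * t) * v (t - c)
      = exp (lam * c) * ∫ t in (0:ℝ)..d - c, exp (lam * t) * v t := by
  rw [← intervalIntegral.integral_const_mul, ← sub_self c,
    ← intervalIntegral.integral_comp_sub_right (fun t => exp (lam * c) * (exp (lam * t) * v t)) c]
  congr 1 with t
  rw [← mul_assoc, ← exp_add, ofReal_sub]
  ring_nf

theorem stmt6 (T : ℝ) (hT : 1 < T)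
    (lam mu nu : ℂ)
    (hlam : lam * Complex.exp lam = 1)
    (hmu : mu * Complex.exp mu = 1)
    (hnu : nu * Complex.exp nu = 1)
    (hmunu : mu ≠ nu)
    (mtld ntld : ℂ)
    (hmut : mtld = Complex.exp (-(mu * (T - 1))))
    (hnut : ntld = Complex.exp (-(nu * (T - 1))))
    (hmutnut : mtld ≠ ntld)
    (a : ℂ) (ha : a = 1 + 1 / mu)
    (b1 b2 : ℂ)
    (hb1 : b1 = -mtld / ((ntld - mtld) * a))
    (hb2 : b2 = mtld * ntld / ((ntld - mtld) * a))
    (g : ℝ → ℂ)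
    (hg : ∀ t : ℝ, g t =
      (if t ∈ Icc (0:ℝ) 1 then b1 * (Complex.exp (-(mu * t)) - Complex.exp (-(nu * t))) else 0)
      + (if t ∈ Icc (T - 1) T then
          b2 * (Complex.exp (-(mu * (t - T + 1))) - Complex.exp (-(nu * (t - T + 1)))) else 0)) :
    (lam = mu → ∫ t in (0:ℝ)..T, Complex.exp (lam * t) * g t = 1) ∧
    (lam ≠ mu → ∫ t in (0:ℝ)..T, Complex.exp (lam * t) * g t = 0) := by
  set φ : ℝ → ℂ := fun t => exp (-(mu * t)) - exp (-(nu * t)) with hφ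
  have hpulses : ∀ t : ℝ, exp (lam * t) * g t
      = (Icc (0:ℝ) 1).indicator (fun t => b1 * (exp (lam * t) * φ t)) t
        + (Icc (T - 1) T).indicator (fun t => b2 * (exp (lam * t) * φ (t - (T - 1)))) t := by
    intro t
    simp only [hg, indicator_apply, hφ]
    split_ifs <;> push_cast <;> ring_nf
  have hint : ∀ {c d : ℝ} {f : ℝ → ℂ}, Continuous f →
      IntervalIntegrable ((Icc c d).indicator f) volume 0 T := fun hf =>
    (hf.integrableOn_Icc.integrable_indicator measurableSet_Icc).intervalIntegrable
  have key : ∫ t in (0:ℝ)..T, exp (lam * t) * g t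
      = (b1 + exp (lam * (T - 1)) * b2) * ∫ t in (0:ℝ)..1, exp (lam * t) * φ t := by
    rw [intervalIntegral.integral_congr fun t _ => hpulses t,
      intervalIntegral.integral_add (hint (by fun_prop)) (hint (by fun_prop)),
      intervalIntegral.integral_indicator_Icc le_rfl zero_le_one hT.le,
      intervalIntegral.integral_indicator_Icc (by linarith) (by linarith) le_rfl,
      intervalIntegral.integral_const_mul, intervalIntegral.integral_const_mul,
      integral_exp_mul_comp_sub, sub_sub_cancel]
    push_cast
    ring
  have hmoment := integral_exp_mul_exp_sub_exp lam mu nu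
  have hmt0 : mtld ≠ 0 := hmut ▸ exp_ne_zero _
  have hnt0 : ntld ≠ 0 := hnut ▸ exp_ne_zero _
  have hdiff : ntld - mtld ≠ 0 := sub_ne_zero.2 hmutnut.symm
  refine ⟨fun hl => ?_, fun hlm => ?_⟩
  · subst hl
    have hmu0 : lam ≠ 0 := by rintro rfl; simp at hmu
    have ha_mul : a * lam = lam + 1 := by rw [ha]; field_simp
    have ha0 : a ≠ 0 := fun h0 =>
      ne_neg_one_of_mul_exp_eq_one hmu (by linear_combination lam * h0 - ha_mul)
    have hcoeff : (b1 + mtld⁻¹ * b2) * a = 1 := by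
      rw [hb1, hb2]
      field_simp
      ring
    have hshift : exp (lam * (T - 1)) = mtld⁻¹ := by rw [hmut, exp_neg, inv_inv]
    rw [key, hφ, hmoment, sub_self, integral_exp_sub_mul_of_mul_exp_eq_one hmu hnu hmunu,
      hshift]
    simp only [zero_mul, exp_zero, intervalIntegral.integral_const, sub_zero, one_smul]
    rw [ha] at hcoeff
    linear_combination hcoeff
  · by_cases hln : lam = nu
    · subst hln
      have hshift : exp (lam * (T - 1)) = ntld⁻¹ := by rw [hnut, exp_neg, inv_inv]
      have hcoeff : b1 + ntld⁻¹ * b2 = 0 := by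
        rw [hb1, hb2]
        field_simp
        ring
      rw [key, hshift, hcoeff, zero_mul]
    · rw [key, hφ, hmoment, integral_exp_sub_mul_of_mul_exp_eq_one hlam hmu hlm,
        integral_exp_sub_mul_of_mul_exp_eq_one hlam hnu hln, sub_self, mul_zero]
end
end

section
/- Let λ, μ ∈ ℂ be distinct solutions of w e^{w} = 1 with Re λ ≠ 0, Re μ ≠ 0 and conj(λ) + μ ≠ 0. Then ∫₀¹ |e^{−conj(λ) t} − e^{−conj(μ) t}|² dt = −[(|λ|² − 1)·Re μ + (|μ|² − 1)·Re λ]·|λ − μ|² / (2·Re λ·Re μ·|conj(λ) + μ|²). -/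
noncomputable section

open Complex intervalIntegral


private lemma stmt7_aux (a b c d : ℝ) (ha : a ≠ 0) (hc : c ≠ 0)
    (hns : (a + c) * (a + c) + (-b + d) * (-b + d) ≠ 0) :
    (a * a - -b * b - 1) * -(a + a) /
              (-(a + a) * -(a + a) + -(-b + b) * -(-b + b)) +
            (a * b + -b * a - 0) * -(-b + b) /
              (-(a + a) * -(a + a) + -(-b + b) * -(-b + b)) +
          ((c * c - -d * d - 1) * -(c + c) /
              (-(c + c) * -(c + c) + -(-d + d) * -(-d + d)) +
            (c * d + -d * c - 0) * -(-d + d) /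
              (-(c + c) * -(c + c) + -(-d + d) * -(-d + d))) -
        ((a * c - -b * d - 1) * -(a + c) /
            (-(a + c) * -(a + c) + -(-b + d) * -(-b + d)) +
          (a * d + -b * c - 0) * -(-b + d) /
            (-(a + c) * -(a + c) + -(-b + d) * -(-b + d))) -
      ((a * c - b * -d - 1) * -(a + c) /
          (-(a + c) * -(a + c) + -(b + -d) * -(b + -d)) +
        (a * -d + b * c - 0) * -(b + -d) /
          (-(a + c) * -(a + c) + -(b + -d) * -(b + -d))) =
    -((a * a + b * b - 1) * c + (c * c + d * d - 1) * a) *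
        ((a - c) * (a - c) + (b - d) * (b - d)) /
      (2 * a * c * ((a + c) * (a + c) + (-b + d) * (-b + d))) := by
  rw [show (-(a + c) * -(a + c) + -(b + -d) * -(b + -d)) = ((a+c)*(a+c) + (-b+d)*(-b+d)) by ring,
     show (-(a + c) * -(a + c) + -(-b + d) * -(-b + d)) = ((a+c)*(a+c) + (-b+d)*(-b+d)) by ring,
     show (-(a + a) * -(a + a) + -(-b + b) * -(-b + b)) = (2*a)*(2*a) by ring,
     show (-(c + c) * -(c + c) + -(-d + d) * -(-d + d)) = (2*c)*(2*c) by ring]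
  have h2a : (2*a) ≠ 0 := by positivity
  have h2c : (2*c) ≠ 0 := by positivity
  generalize hD : (a+c)*(a+c) + (-b+d)*(-b+d) = D at hns ⊢
  field_simp
  subst hD
  ring

theorem stmt7 (lam mu : ℂ)
    (hlam : lam * Complex.exp lam = 1)
    (hmu : mu * Complex.exp mu = 1)
    (hne : lam ≠ mu)
    (hre_lam : lam.re ≠ 0) (hre_mu : mu.re ≠ 0)
    (hsum : (starRingEnd ℂ) lam + mu ≠ 0) :
    ∫ t in (0:ℝ)..1,
        ‖Complex.exp (-((starRingEnd ℂ) lam * t))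
          - Complex.exp (-((starRingEnd ℂ) mu * t))‖ ^ 2
      = -((‖lam‖ ^ 2 - 1) * mu.re + (‖mu‖ ^ 2 - 1) * lam.re)
          * ‖lam - mu‖ ^ 2
        / (2 * lam.re * mu.re * ‖(starRingEnd ℂ) lam + mu‖ ^ 2) := by
  set L := (starRingEnd ℂ) lam with hL
  set M := (starRingEnd ℂ) mu with hM
  -- exp values
  have hexp_lam : Complex.exp (-lam) = lam := by
    rw [Complex.exp_neg]
    exact inv_eq_of_mul_eq_one_left hlam
  have hexp_mu : Complex.exp (-mu) = mu := by
    rw [Complex.exp_neg]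
    exact inv_eq_of_mul_eq_one_left hmu
  have hexp_L : Complex.exp (-L) = L := by
    rw [hL, ← map_neg, Complex.exp_conj, hexp_lam]
  have hexp_M : Complex.exp (-M) = M := by
    rw [hM, ← map_neg, Complex.exp_conj, hexp_mu]
  -- constants
  have hc1 : -(L + lam) ≠ 0 := by
    simp only [hL, neg_ne_zero]
    rw [add_comm, Complex.add_conj]
    exact_mod_cast mul_ne_zero two_ne_zero hre_lam
  have hc2 : -(M + mu) ≠ 0 := by
    simp only [hM, neg_ne_zero]
    rw [add_comm, Complex.add_conj]
    exact_mod_cast mul_ne_zero two_ne_zero hre_mu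
  have hc3 : -(L + mu) ≠ 0 := neg_ne_zero.mpr hsum
  have hc4 : -(lam + M) ≠ 0 := by
    intro h
    apply hc3
    have := congrArg (starRingEnd ℂ) h
    simpa [hL, hM, add_comm] using this
  set g : ℝ → ℂ := fun t => Complex.exp (-(L + lam) * t) + Complex.exp (-(M + mu) * t)
      - Complex.exp (-(L + mu) * t) - Complex.exp (-(lam + M) * t) with hg
  have hgc : Continuous g := by fun_prop
  have key : ∀ t : ℝ,
      (‖Complex.exp (-(L * t)) - Complex.exp (-(M * t))‖ ^ 2 : ℝ) = (g t).re := by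
    intro t
    have : ((Complex.exp (-(L * t)) - Complex.exp (-(M * t)))
        * (starRingEnd ℂ) (Complex.exp (-(L * t)) - Complex.exp (-(M * t)))) = g t := by
      simp only [map_sub, ← Complex.exp_conj, hg]
      simp only [map_neg, map_mul, Complex.conj_conj, Complex.conj_ofReal, hL, hM]
      rw [sub_mul, mul_sub, mul_sub, ← Complex.exp_add, ← Complex.exp_add,
        ← Complex.exp_add, ← Complex.exp_add]
      ring_nf
    rw [Complex.sq_norm, ← this, Complex.mul_conj, Complex.ofReal_re]
  have int1 : IntervalIntegrable (fun t : ℝ => Complex.exp (-(L + lam) * t)) MeasureTheory.volume 0 1 := (by fun_prop : Continuous _).intervalIntegrable 0 1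
  have int2 : IntervalIntegrable (fun t : ℝ => Complex.exp (-(M + mu) * t)) MeasureTheory.volume 0 1 := (by fun_prop : Continuous _).intervalIntegrable 0 1
  have int3 : IntervalIntegrable (fun t : ℝ => Complex.exp (-(L + mu) * t)) MeasureTheory.volume 0 1 := (by fun_prop : Continuous _).intervalIntegrable 0 1
  have int4 : IntervalIntegrable (fun t : ℝ => Complex.exp (-(lam + M) * t)) MeasureTheory.volume 0 1 := (by fun_prop : Continuous _).intervalIntegrable 0 1
  have hgint : ∫ t in (0:ℝ)..1, g t
      = (L * lam - 1) / (-(L + lam)) + (M * mu - 1) / (-(M + mu))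
        - (L * mu - 1) / (-(L + mu)) - (lam * M - 1) / (-(lam + M)) := by
    simp only [hg]
    rw [intervalIntegral.integral_sub (((int1.add int2).sub int3)) int4,
      intervalIntegral.integral_sub (int1.add int2) int3,
      intervalIntegral.integral_add int1 int2,
      integral_exp_mul_complex hc1, integral_exp_mul_complex hc2,
      integral_exp_mul_complex hc3, integral_exp_mul_complex hc4]
    push_cast
    have e1 : Complex.exp (-(L + lam) * 1) = L * lam := by
      rw [mul_one, neg_add, Complex.exp_add, hexp_L, hexp_lam]
    have e2 : Complex.exp (-(M + mu) * 1) = M * mu := by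
      rw [mul_one, neg_add, Complex.exp_add, hexp_M, hexp_mu]
    have e3 : Complex.exp (-(L + mu) * 1) = L * mu := by
      rw [mul_one, neg_add, Complex.exp_add, hexp_L, hexp_mu]
    have e4 : Complex.exp (-(lam + M) * 1) = lam * M := by
      rw [mul_one, neg_add, Complex.exp_add, hexp_lam, hexp_M]
    rw [e1, e2, e3, e4]
    norm_num
  have hmain : (∫ t in (0:ℝ)..1,
      ‖Complex.exp (-(L * t)) - Complex.exp (-(M * t))‖ ^ 2)
      = ((L * lam - 1) / (-(L + lam)) + (M * mu - 1) / (-(M + mu))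
        - (L * mu - 1) / (-(L + mu)) - (lam * M - 1) / (-(lam + M))).re := by
    rw [← hgint]
    simp_rw [key]
    exact (Complex.reCLM.intervalIntegral_comp_comm (hgc.intervalIntegrable 0 1))
  rw [hmain]
  have hns : Complex.normSq (L + mu) ≠ 0 := (Complex.normSq_pos.mpr hsum).ne'
  simp only [Complex.normSq_apply, Complex.add_re, Complex.add_im, hL, hM, Complex.conj_re,
    Complex.conj_im] at hns
  simp only [Complex.sq_norm, Complex.div_re, Complex.normSq_apply, Complex.add_re,
    Complex.add_im, Complex.mul_re, Complex.mul_im, Complex.sub_re, Complex.sub_im,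
    Complex.neg_re, Complex.neg_im, Complex.one_re, Complex.one_im, hL, hM,
    Complex.conj_re, Complex.conj_im]

  exact stmt7_aux lam.re lam.im mu.re mu.im hre_lam hre_mu hns
end
end

section
/- Let H be a complex Hilbert space, n ≥ 1, and H₁, …, H_n closed subspaces of H. Assume there exists c > 0 such that ‖x₁ + ⋯ + x_n‖ ≥ c·(‖x₁‖² + ⋯ + ‖x_n‖²)^{1/2} for all x_j ∈ H_j. For each j ∈ {1,…,n} let I_j be an index set, (φ_i^j)_{i∈I_j} a family in H_j, and (f_i^j)_{i∈I_j} a family in H such that ⟨φ_i^j, f_{i'}^j⟩ = δ_{i,i'} for all i, i' ∈ I_j. Then there exists a family (g_i^j) in H such that ⟨φ_{i'}^{j'}, g_i^j⟩ = 1 if (i,j) = (i',j') and 0 otherwise, and ‖g_i^j‖ ≤ (1/c)·‖f_i^j‖ for all i, j. -/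
/-!
The summation map `T : H₁ ⊕ ⋯ ⊕ Hₙ → H` on the `ℓ²`-direct sum satisfies `‖x‖ ≤ c⁻¹ ‖T x‖`, so
every functional `ℓ` on the direct sum factors through the range of `T` with norm at most
`c⁻¹ ‖ℓ‖`. Hahn–Banach and the Riesz representation turn it into a vector `g ∈ H` with
`⟪g, T x⟫ = ℓ x`. For `ℓ x = ⟪f_i^j, x_j⟫` this `g` pairs with `H_j` exactly as `f_i^j` does,
vanishes on every other `H_j'`, and has norm at most `c⁻¹ ‖f_i^j‖`.
-/

open scoped InnerProductSpace NNReal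

noncomputable section

section

variable {𝕜 E H : Type*} [RCLike 𝕜] [NormedAddCommGroup E] [NormedSpace 𝕜 E]
  [NormedAddCommGroup H] [InnerProductSpace 𝕜 H]

theorem exists_inner_map_eq_of_antilipschitz [CompleteSpace H] {T : E →ₗ[𝕜] H} {K : ℝ≥0}
    (hT : AntilipschitzWith K T) (ℓ : StrongDual 𝕜 E) :
    ∃ g : H, (∀ x, ⟪g, T x⟫_𝕜 = ℓ x) ∧ ‖g‖ ≤ K * ‖ℓ‖ := by
  let e := LinearEquiv.ofInjective T hT.injective
  let ψ : StrongDual 𝕜 (LinearMap.range T) :=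
    (ℓ.toLinearMap ∘ₗ e.symm.toLinearMap).mkContinuous (K * ‖ℓ‖) fun v => calc
      ‖ℓ (e.symm v)‖ ≤ ‖ℓ‖ * ‖e.symm v‖ := ℓ.le_opNorm _
      _ ≤ ‖ℓ‖ * (K * ‖v‖) := by
        gcongr
        simpa [e] using ZeroHomClass.bound_of_antilipschitz T hT (e.symm v)
      _ = K * ‖ℓ‖ * ‖v‖ := by ring
  obtain ⟨Φ, hΦψ, hΦ⟩ := exists_extension_norm_eq _ ψ
  refine ⟨(InnerProductSpace.toDual 𝕜 H).symm Φ, fun x => ?_, ?_⟩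
  · rw [InnerProductSpace.toDual_symm_apply]
    exact (hΦψ (e x)).trans (congrArg ℓ (e.symm_apply_apply x))
  · rw [LinearIsometryEquiv.norm_map, hΦ]
    exact LinearMap.mkContinuous_norm_le _ (by positivity) _

variable {ι : Type*} [Fintype ι]

namespace Submodule

@[simps]
def piLpSum (S : ι → Submodule 𝕜 H) : PiLp 2 (fun j => S j) →ₗ[𝕜] H where
  toFun x := ∑ j, (x j : H)
  map_add' x y := by simp [Finset.sum_add_distrib]
  map_smul' a x := by simp [Finset.smul_sum]

variable {S : ι → Submodule 𝕜 H}

theorem piLpSum_single [DecidableEq ι] (j : ι) (y : S j) :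
    piLpSum S (PiLp.single 2 j y) = y := by
  rw [piLpSum_apply, Finset.sum_eq_single_of_mem j (Finset.mem_univ j) fun k _ hk => by
    simp [hk], PiLp.single_eq_same]

theorem antilipschitzWith_piLpSum {c : ℝ} (hc : 0 < c)
    (hlow : ∀ x : ι → H, (∀ j, x j ∈ S j) → c * √(∑ j, ‖x j‖ ^ 2) ≤ ‖∑ j, x j‖) :
    AntilipschitzWith c⁻¹.toNNReal (piLpSum S) :=
  AddMonoidHomClass.antilipschitz_of_bound (piLpSum S) fun x => by
    rw [Real.coe_toNNReal _ (inv_nonneg.2 hc.le), ← div_eq_inv_mul, le_div_iff₀' hc,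
      PiLp.norm_eq_of_L2]
    exact hlow (fun j => x j) fun j => (x j).2

theorem exists_inner_eq_ite_of_sum_bounded_below [CompleteSpace H] [DecidableEq ι] {c : ℝ}
    (hc : 0 < c)
    (hlow : ∀ x : ι → H, (∀ j, x j ∈ S j) → c * √(∑ j, ‖x j‖ ^ 2) ≤ ‖∑ j, x j‖)
    (j : ι) (f : H) :
    ∃ g : H, (∀ j', ∀ y ∈ S j', ⟪y, g⟫_𝕜 = if j' = j then ⟪y, f⟫_𝕜 else 0) ∧
      ‖g‖ ≤ c⁻¹ * ‖f‖ := by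
  let ℓ : StrongDual 𝕜 (PiLp 2 (fun j => S j)) :=
    (innerSL 𝕜 f).comp ((S j).subtypeL.comp (PiLp.proj 2 (fun j => S j) j))
  have hℓ : ‖ℓ‖ ≤ ‖f‖ := ℓ.opNorm_le_bound (norm_nonneg f) fun x => by
    have h1 : ‖ℓ x‖ ≤ ‖f‖ * ‖(x j : H)‖ := norm_inner_le_norm _ _
    have h2 : ‖(x j : H)‖ ≤ ‖x‖ := PiLp.norm_apply_le x j
    exact h1.trans (mul_le_mul_of_nonneg_left h2 (norm_nonneg f))
  have hT := antilipschitzWith_piLpSum hc hlow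
  obtain ⟨g, hg, hgℓ⟩ := exists_inner_map_eq_of_antilipschitz hT ℓ
  refine ⟨g, fun j' y hy => ?_, ?_⟩
  · have hgy := hg (PiLp.single 2 j' ⟨y, hy⟩)
    rw [piLpSum_single] at hgy
    rw [← inner_conj_symm, hgy]
    split_ifs with h
    · subst h
      simp [ℓ]
    · simp [ℓ, Ne.symm h]
  · calc ‖g‖ ≤ c⁻¹ * ‖ℓ‖ := by rwa [Real.coe_toNNReal _ (inv_nonneg.2 hc.le)] at hgℓ
      _ ≤ c⁻¹ * ‖f‖ := mul_le_mul_of_nonneg_left hℓ (inv_nonneg.2 hc.le)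

end Submodule

end

theorem stmt10_general (H : Type*) [NormedAddCommGroup H] [InnerProductSpace ℂ H] [CompleteSpace H]
    (n : ℕ)
    (S : Fin n → Submodule ℂ H)
    (c : ℝ) (hc : 0 < c)
    -- the summation operator `H₁ ⊕ ⋯ ⊕ Hₙ → H` is bounded below:
    (hlow : ∀ x : Fin n → H, (∀ j, x j ∈ S j) →
      c * Real.sqrt (∑ j, ‖x j‖ ^ 2) ≤ ‖∑ j, x j‖)
    (I : Fin n → Type*)
    (φ : (j : Fin n) → I j → H) (hφ : ∀ j i, φ j i ∈ S j)
    (f : (j : Fin n) → I j → H)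
    -- for each `j`, `(f i^j)` is biorthogonal to `(φ i^j)`:
    (hbio : ∀ (j : Fin n) (i i' : I j),
      (i = i' → ⟪φ j i, f j i'⟫_ℂ = 1) ∧ (i ≠ i' → ⟪φ j i, f j i'⟫_ℂ = 0)) :
    ∃ g : (j : Fin n) → I j → H,
      -- `(g i^j)` is biorthogonal to the whole family `(φ i^j)`:
      (∀ p q : (j : Fin n) × I j,
        (p = q → ⟪φ q.1 q.2, g p.1 p.2⟫_ℂ = 1) ∧ (p ≠ q → ⟪φ q.1 q.2, g p.1 p.2⟫_ℂ = 0)) ∧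
      -- with the norm bound `‖g_i^j‖ ≤ (1/c) ‖f_i^j‖`:
      (∀ (j : Fin n) (i : I j), ‖g j i‖ ≤ (1 / c) * ‖f j i‖) := by
  choose g hg_inner hg_norm using fun j (i : I j) =>
    Submodule.exists_inner_eq_ite_of_sum_bounded_below hc hlow j (f j i)
  refine ⟨g, fun ⟨j, i⟩ ⟨j', i'⟩ => ?_, fun j i => by simpa only [one_div] using hg_norm j i⟩
  rw [hg_inner j i j' _ (hφ j' i')]
  by_cases hj : j' = j
  · subst hj
    simpa only [if_true, Sigma.mk.inj_iff, heq_eq_eq, true_and, ne_eq, eq_comm (a := i)]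
      using hbio j' i' i
  · simp [hj, Ne.symm hj]

theorem stmt10 (H : Type*) [NormedAddCommGroup H] [InnerProductSpace ℂ H] [CompleteSpace H]
    (n : ℕ) (hn : 1 ≤ n)
    (S : Fin n → Submodule ℂ H) (hS : ∀ j, IsClosed (S j : Set H))
    (c : ℝ) (hc : 0 < c)
    -- the summation operator `H₁ ⊕ ⋯ ⊕ Hₙ → H` is bounded below:
    (hlow : ∀ x : Fin n → H, (∀ j, x j ∈ S j) →
      c * Real.sqrt (∑ j, ‖x j‖ ^ 2) ≤ ‖∑ j, x j‖)
    (I : Fin n → Type*)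
    (φ : (j : Fin n) → I j → H) (hφ : ∀ j i, φ j i ∈ S j)
    (f : (j : Fin n) → I j → H)
    -- for each `j`, `(f i^j)` is biorthogonal to `(φ i^j)`:
    (hbio : ∀ (j : Fin n) (i i' : I j),
      (i = i' → ⟪φ j i, f j i'⟫_ℂ = 1) ∧ (i ≠ i' → ⟪φ j i, f j i'⟫_ℂ = 0)) :
    ∃ g : (j : Fin n) → I j → H,
      -- `(g i^j)` is biorthogonal to the whole family `(φ i^j)`:
      (∀ p q : (j : Fin n) × I j,
        (p = q → ⟪φ q.1 q.2, g p.1 p.2⟫_ℂ = 1) ∧ (p ≠ q → ⟪φ q.1 q.2, g p.1 p.2⟫_ℂ = 0)) ∧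
      -- with the norm bound `‖g_i^j‖ ≤ (1/c) ‖f_i^j‖`:
      (∀ (j : Fin n) (i : I j), ‖g j i‖ ≤ (1 / c) * ‖f j i‖) :=
  stmt10_general H n S c hc hlow I φ hφ f hbio
end
end

section
/- Let a₁, …, aₙ be distinct nonzero real numbers and let T > n. Then the family of exponentials {t ↦ e^{λ t} : λ ∈ ℂ, λ e^{λ} = a_j for some j ∈ {1,…,n}} is minimal in L²((0,T); ℂ), i.e. no member of the family belongs to the closed linear span of the remaining members. -/
open MeasureTheory Set

noncomputable section

open Filter Topology

namespace S12

variable {M M' : ℝ} {h g : ℝ → ℂ}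

/-- The transform `E(μ) = ∫ e^{μ t} h(t) dt`. -/
def Tr (h : ℝ → ℂ) (μ : ℂ) : ℂ := ∫ t : ℝ, Complex.exp (μ * t) * h t

/-- bounded measurable functions supported in `(0, M]` -/
def Nice (M : ℝ) (h : ℝ → ℂ) : Prop :=
  Measurable h ∧ (∃ C, ∀ t, ‖h t‖ ≤ C) ∧ ∀ t, t ∉ Ioc (0:ℝ) M → h t = 0

def Sh (s : ℝ) (h : ℝ → ℂ) : ℝ → ℂ := fun t => h (t - s)

lemma Nice.mono {M M' : ℝ} {h : ℝ → ℂ} (hh : Nice M h) (hMM : M ≤ M') : Nice M' h := by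
  refine ⟨hh.1, hh.2.1, fun t ht => hh.2.2 t ?_⟩
  intro hmem
  exact ht ⟨hmem.1, hmem.2.trans hMM⟩

lemma Nice.integrable_mul {M : ℝ} {h : ℝ → ℂ} (hh : Nice M h) {g : ℝ → ℂ}
    (hg : Continuous g) : Integrable (fun t => g t * h t) := by
  obtain ⟨hm, ⟨C, hC⟩, hsupp⟩ := hh
  obtain ⟨Cg, hCg⟩ : ∃ Cg, ∀ t ∈ Icc (0:ℝ) M, ‖g t‖ ≤ Cg :=
    (isCompact_Icc).exists_bound_of_continuousOn hg.continuousOn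
  have heq : (fun t => g t * h t) = (Ioc (0:ℝ) M).indicator (fun t => g t * h t) := by
    funext t
    by_cases ht : t ∈ Ioc (0:ℝ) M
    · rw [Set.indicator_of_mem ht]
    · rw [Set.indicator_of_notMem ht, hsupp t ht, mul_zero]
  rw [heq, integrable_indicator_iff measurableSet_Ioc]
  apply Measure.integrableOn_of_bounded (M := Cg * C)
  · exact (measure_Ioc_lt_top).ne
  · exact ((hg.measurable.mul hm).aestronglyMeasurable)
  · refine (ae_restrict_iff' measurableSet_Ioc).2 (ae_of_all _ fun t ht => ?_)
    rw [norm_mul]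
    exact mul_le_mul (hCg t ⟨le_of_lt ht.1, ht.2⟩) (hC t) (norm_nonneg _)
      ((norm_nonneg _).trans (hCg t ⟨le_of_lt ht.1, ht.2⟩))

lemma Nice.integrable_exp {M : ℝ} {h : ℝ → ℂ} (hh : Nice M h) (μ : ℂ) :
    Integrable (fun t : ℝ => Complex.exp (μ * t) * h t) :=
  hh.integrable_mul (by fun_prop)

lemma Nice.integrable_texp {M : ℝ} {h : ℝ → ℂ} (hh : Nice M h) (μ : ℂ) :
    Integrable (fun t : ℝ => (t : ℂ) * Complex.exp (μ * t) * h t) := by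
  have := hh.integrable_mul (g := fun t => (t : ℂ) * Complex.exp (μ * t)) (by fun_prop)
  simpa using this


lemma norm_cexp_mul (μ : ℂ) (t : ℝ) : ‖Complex.exp (μ * t)‖ = Real.exp (μ.re * t) := by
  rw [Complex.norm_exp]
  congr 1
  simp [Complex.mul_re]

lemma Nice.hasDerivAt_Tr (hh : Nice M h) (μ : ℂ) :
    HasDerivAt (Tr h) (∫ t : ℝ, (t : ℂ) * Complex.exp (μ * t) * h t) μ := by
  obtain ⟨hm, ⟨C, hC⟩, hsupp⟩ := id hh
  have hM : 0 ≤ max M 0 := le_max_right _ _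
  set K : ℝ := max M 0 * Real.exp ((‖μ‖ + 1) * max M 0) * C with hK
  have hbound : Integrable ((Ioc (0:ℝ) M).indicator fun _ => K) := by
    rw [integrable_indicator_iff measurableSet_Ioc]
    exact integrableOn_const measure_Ioc_lt_top.ne
  refine (hasDerivAt_integral_of_dominated_loc_of_deriv_le (F := fun x (t:ℝ) => Complex.exp (x * t) * h t)
    (F' := fun x (t:ℝ) => (t:ℂ) * Complex.exp (x * t) * h t) (bound := (Ioc (0:ℝ) M).indicator fun _ => K)
    (Metric.ball_mem_nhds μ one_pos) ?_ (hh.integrable_exp μ) ?_ ?_ hbound ?_).2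
  · exact Eventually.of_forall fun x => (hh.integrable_exp x).aestronglyMeasurable
  · exact (hh.integrable_texp μ).aestronglyMeasurable
  · refine ae_of_all _ fun t x hx => ?_
    by_cases ht : t ∈ Ioc (0:ℝ) M
    · rw [Set.indicator_of_mem ht]
      have ht0 : (0:ℝ) ≤ t := ht.1.le
      have htM : t ≤ max M 0 := le_max_of_le_left ht.2
      have hxn : ‖x‖ ≤ ‖μ‖ + 1 := by
        have := mem_ball_iff_norm.1 hx
        calc ‖x‖ = ‖μ + (x - μ)‖ := by ring_nf
        _ ≤ ‖μ‖ + ‖x - μ‖ := norm_add_le _ _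
        _ ≤ ‖μ‖ + 1 := by linarith
      have hre : x.re * t ≤ (‖μ‖ + 1) * max M 0 := by
        have h1 : x.re ≤ ‖x‖ := Complex.re_le_norm x
        have h2 : x.re * t ≤ (‖μ‖+1) * t :=
          mul_le_mul_of_nonneg_right (h1.trans hxn) ht0
        have h3 : (‖μ‖+1) * t ≤ (‖μ‖+1) * max M 0 :=
          mul_le_mul_of_nonneg_left htM (by positivity)
        linarith
      have hCpos : (0:ℝ) ≤ C := (norm_nonneg _).trans (hC 0)
      have hnt : ‖(t:ℂ)‖ ≤ max M 0 := by
        rw [Complex.norm_real, Real.norm_eq_abs, abs_of_nonneg ht0]; exact htM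
      have hne : ‖Complex.exp (x * t)‖ ≤ Real.exp ((‖μ‖ + 1) * max M 0) := by
        rw [norm_cexp_mul]; exact Real.exp_le_exp.2 hre
      rw [hK, norm_mul, norm_mul]
      exact mul_le_mul (mul_le_mul hnt hne (norm_nonneg _) hM) (hC t) (norm_nonneg _)
        (by positivity)
    · simp [Set.indicator_of_notMem ht, hsupp t ht]
  · refine ae_of_all _ fun t x hx => ?_
    have h1 : HasDerivAt (fun x : ℂ => Complex.exp (x * t)) ((t:ℂ) * Complex.exp (x * t)) x := by
      have h0 : HasDerivAt (fun x : ℂ => x * (t:ℂ)) (t:ℂ) x := hasDerivAt_mul_const _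
      simpa [mul_comm] using h0.cexp
    exact h1.mul_const (h t)


lemma Nice.differentiable_Tr (hh : Nice M h) : Differentiable ℂ (Tr h) :=
  fun μ => (hh.hasDerivAt_Tr μ).differentiableAt

lemma Nice.continuous_Tr (hh : Nice M h) : Continuous (Tr h) :=
  hh.differentiable_Tr.continuous

lemma Nice.analyticAt_Tr (hh : Nice M h) (μ : ℂ) : AnalyticAt ℂ (Tr h) μ :=
  hh.differentiable_Tr.analyticAt μ


lemma Nice.sh {s : ℝ} (hs : 0 ≤ s) (hh : Nice M h) : Nice (M + s) (Sh s h) := by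
  obtain ⟨hm, ⟨C, hC⟩, hsupp⟩ := hh
  refine ⟨hm.comp (by fun_prop), ⟨C, fun t => hC _⟩, fun t ht => ?_⟩
  apply hsupp
  intro ⟨h1, h2⟩
  exact ht ⟨by linarith, by linarith⟩

lemma Tr_sh (hh : Nice M h) (s : ℝ) (μ : ℂ) :
    Tr (Sh s h) μ = Complex.exp (s * μ) * Tr h μ := by
  have : Tr (Sh s h) μ = ∫ t : ℝ, (fun u : ℝ => Complex.exp (μ * (u + s)) * h u) (t - s) := by
    unfold Tr Sh
    congr 1
    funext t
    show _ = Complex.exp (μ * ((t - s : ℝ) + (s:ℝ))) * h (t - s)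
    congr 2
    push_cast
    ring
  rw [this, integral_sub_right_eq_self (fun u : ℝ => Complex.exp (μ * (u + s)) * h u) s]
  unfold Tr
  rw [← integral_const_mul]
  congr 1
  funext u
  rw [← mul_assoc, ← Complex.exp_add]
  push_cast
  ring_nf


def Dop (c : ℂ) (h : ℝ → ℂ) : ℝ → ℂ :=
  fun t => -Complex.exp (-(c * t)) * ∫ r in Iic t, Complex.exp (c * r) * h r

section Dop
variable {c : ℂ} (hh : Nice M h) (hc : Tr h c = 0)
include hh

lemma Dop_inner_eq_zero_of_nonpos {t : ℝ} (ht : t ≤ 0) :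
    (∫ r in Iic t, Complex.exp (c * r) * h r) = 0 := by
  have : EqOn (fun r : ℝ => Complex.exp (c * r) * h r) 0 (Iic t) := by
    intro r hr
    have : h r = 0 := hh.2.2 r (fun hmem => absurd hmem.1 (by simp at hr ⊢; linarith))
    simp [this]
  rw [setIntegral_congr_fun measurableSet_Iic this]
  simp

include hc in
lemma Dop_inner_eq_zero_of_gt {t : ℝ} (ht : M < t) :
    (∫ r in Iic t, Complex.exp (c * r) * h r) = 0 := by
  have hsplit := integral_add_compl (measurableSet_Iic (a := t)) (hh.integrable_exp c)
  rw [compl_Iic] at hsplit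
  have hIoi : (∫ r in Ioi t, Complex.exp (c * r) * h r) = 0 := by
    have : EqOn (fun r : ℝ => Complex.exp (c * r) * h r) 0 (Ioi t) := by
      intro r hr
      have : h r = 0 := hh.2.2 r (fun hmem => by simp at hr; linarith [hmem.2])
      simp [this]
    rw [setIntegral_congr_fun measurableSet_Ioi this]
    simp
  have : Tr h c = ∫ t : ℝ, Complex.exp (c * t) * h t := rfl
  rw [hIoi, add_zero, ← this, hc] at hsplit
  exact hsplit

include hc in
lemma Dop_eq_zero_of_not_mem {t : ℝ} (ht : t ∉ Ioc (0:ℝ) M) : Dop c h t = 0 := by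
  unfold Dop
  rcases not_and_or.1 (fun hmem : 0 < t ∧ t ≤ M => ht ⟨hmem.1, hmem.2⟩) with h1 | h2
  · rw [Dop_inner_eq_zero_of_nonpos hh (not_lt.1 h1), mul_zero]
  · rw [Dop_inner_eq_zero_of_gt hh hc (not_le.1 h2), mul_zero]

include hc in
lemma Nice.dop : Nice M (Dop c h) := by
  refine ⟨?_, ?_, fun t ht => Dop_eq_zero_of_not_mem hh hc ht⟩
  · -- measurability
    have hcont : Continuous (fun t : ℝ => ∫ r in Iic t, Complex.exp (c * r) * h r) := by
      have hInt := hh.integrable_exp c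
      have : (fun t : ℝ => ∫ r in Iic t, Complex.exp (c * r) * h r)
          = fun t : ℝ => (∫ x in (0:ℝ)..t, Complex.exp (c * x) * h x)
              + ∫ r in Iic (0:ℝ), Complex.exp (c * r) * h r := by
        funext t
        have := intervalIntegral.integral_Iic_sub_Iic (μ := volume)
          (f := fun r : ℝ => Complex.exp (c * r) * h r) (a := (0:ℝ)) (b := t)
          hInt.integrableOn hInt.integrableOn
        rw [← this]
        ring
      rw [this]
      exact ((intervalIntegral.continuous_primitive
        (fun a b => hInt.intervalIntegrable) 0)).add continuous_const
    exact ((Complex.measurable_exp.comp (by fun_prop)).neg).mul hcont.measurable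
  · -- boundedness
    obtain ⟨C, hC⟩ := hh.2.1
    set I1 : ℝ := ∫ t : ℝ, ‖Complex.exp (c * t) * h t‖ with hI1
    have hI1nn : 0 ≤ I1 := integral_nonneg fun t => norm_nonneg _
    set B : ℝ := Real.exp (‖c‖ * max M 0) * I1 with hB
    refine ⟨B, fun t => ?_⟩
    by_cases ht : t ∈ Ioc (0:ℝ) M
    · rw [Dop]
      rw [norm_mul, norm_neg]
      have h1 : ‖Complex.exp (-(c * t))‖ ≤ Real.exp (‖c‖ * max M 0) := by
        have : -(c * (t:ℂ)) = (-c) * (t:ℝ) := by ring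
        rw [this, norm_cexp_mul]
        apply Real.exp_le_exp.2
        have habs : (-c).re ≤ ‖c‖ := by
          calc (-c).re ≤ |(-c).re| := le_abs_self _
          _ ≤ ‖-c‖ := Complex.abs_re_le_norm _
          _ = ‖c‖ := norm_neg c
        calc (-c).re * t ≤ ‖c‖ * t := mul_le_mul_of_nonneg_right habs ht.1.le
        _ ≤ ‖c‖ * max M 0 := mul_le_mul_of_nonneg_left
            (le_max_of_le_left ht.2) (norm_nonneg _)
      have h2 : ‖∫ r in Iic t, Complex.exp (c * r) * h r‖ ≤ I1 := by
        calc ‖∫ r in Iic t, Complex.exp (c * r) * h r‖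
            ≤ ∫ r in Iic t, ‖Complex.exp (c * r) * h r‖ := norm_integral_le_integral_norm _
        _ ≤ I1 := setIntegral_le_integral (hh.integrable_exp c).norm
            (ae_of_all _ fun r => norm_nonneg _)
      calc _ ≤ Real.exp (‖c‖ * max M 0) * I1 :=
        mul_le_mul h1 h2 (norm_nonneg _) (Real.exp_pos _).le
      _ = B := rfl
    · rw [Dop_eq_zero_of_not_mem hh hc ht, norm_zero]
      positivity

end Dop


section Dop2
variable {c : ℂ} (hh : Nice M h) (hc : Tr h c = 0)

/-- the Fubini kernel -/
def Kk (c μ : ℂ) (h : ℝ → ℂ) : ℝ × ℝ → ℂ :=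
  ({p : ℝ × ℝ | 0 ≤ p.1 ∧ p.1 < p.2}).indicator
    (fun p => Complex.exp ((μ - c) * p.1) * (Complex.exp (c * p.2) * h p.2))

include hh hc in
lemma Tr_dop_core (μ : ℂ) :
    Tr (Dop c h) μ
      = ∫ r : ℝ, (∫ x in (0:ℝ)..r, Complex.exp ((μ - c) * x)) *
          (Complex.exp (c * r) * h r) := by
  obtain ⟨hm, ⟨C, hC⟩, hsupp⟩ := id hh
  have hmK : Measurable (Kk c μ h) := by
    apply Measurable.indicator
    · fun_prop
    · exact MeasurableSet.inter (measurableSet_le measurable_const measurable_fst)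
        (measurableSet_lt measurable_fst measurable_snd)
  -- integrability of the kernel
  have hKint : Integrable (Kk c μ h) ((volume : Measure ℝ).prod volume) := by
    set M' := max M 0 with hM'
    set B : ℝ := Real.exp (‖μ - c‖ * M') * (Real.exp (‖c‖ * M') * C) with hBdef
    have hCnn : 0 ≤ C := (norm_nonneg _).trans (hC 0)
    have hBnn : 0 ≤ B := by positivity
    have hbint : Integrable ((Icc (0:ℝ) M' ×ˢ Icc (0:ℝ) M').indicator fun _ => B)
        ((volume : Measure ℝ).prod volume) := by
      rw [integrable_indicator_iff (measurableSet_Icc.prod measurableSet_Icc)]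
      refine integrableOn_const ?_
      rw [Measure.prod_prod]
      exact (ENNReal.mul_lt_top measure_Icc_lt_top measure_Icc_lt_top).ne
    refine Integrable.mono' hbint hmK.aestronglyMeasurable (ae_of_all _ fun p => ?_)
    by_cases hp : p ∈ {p : ℝ × ℝ | 0 ≤ p.1 ∧ p.1 < p.2}
    · rw [Kk, Set.indicator_of_mem hp]
      by_cases hp2 : p.2 ∈ Ioc (0:ℝ) M
      · have hmem : p ∈ Icc (0:ℝ) M' ×ˢ Icc (0:ℝ) M' := by
          constructor
          · exact ⟨hp.1, le_max_of_le_left (hp.2.le.trans hp2.2)⟩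
          · exact ⟨hp2.1.le, le_max_of_le_left hp2.2⟩
        rw [Set.indicator_of_mem hmem]
        rw [norm_mul, norm_mul]
        have e1 : ‖Complex.exp ((μ - c) * p.1)‖ ≤ Real.exp (‖μ - c‖ * M') := by
          rw [norm_cexp_mul]
          apply Real.exp_le_exp.2
          calc (μ - c).re * p.1 ≤ ‖μ - c‖ * p.1 :=
            mul_le_mul_of_nonneg_right ((Complex.re_le_norm _)) hp.1
          _ ≤ ‖μ - c‖ * M' := mul_le_mul_of_nonneg_left
              (le_max_of_le_left (hp.2.le.trans hp2.2)) (norm_nonneg _)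
        have e2 : ‖Complex.exp (c * p.2)‖ ≤ Real.exp (‖c‖ * M') := by
          rw [norm_cexp_mul]
          apply Real.exp_le_exp.2
          calc c.re * p.2 ≤ ‖c‖ * p.2 :=
            mul_le_mul_of_nonneg_right (Complex.re_le_norm _) hp2.1.le
          _ ≤ ‖c‖ * M' := mul_le_mul_of_nonneg_left (le_max_of_le_left hp2.2) (norm_nonneg _)
        exact mul_le_mul e1 (mul_le_mul e2 (hC _) (norm_nonneg _) (Real.exp_pos _).le)
          (by positivity) (Real.exp_pos _).le
      · rw [hsupp _ hp2]
        simp only [mul_zero, norm_zero]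
        exact Set.indicator_apply_nonneg fun _ => hBnn
    · rw [Kk, Set.indicator_of_notMem hp, norm_zero]
      exact Set.indicator_apply_nonneg fun _ => hBnn
  -- step 1 : pointwise identity in t
  have step1 : ∀ t : ℝ, Complex.exp (μ * t) * Dop c h t = ∫ r : ℝ, Kk c μ h (t, r) := by
    intro t
    by_cases ht : 0 ≤ t
    · -- G t = - ∫_{Ioi t}
      have hsplit := integral_add_compl (measurableSet_Iic (a := t)) (hh.integrable_exp c)
      rw [compl_Iic] at hsplit
      have hG : (∫ r in Iic t, Complex.exp (c * r) * h r)
          = -∫ r in Ioi t, Complex.exp (c * r) * h r := by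
        have : Tr h c = ∫ t : ℝ, Complex.exp (c * t) * h t := rfl
        rw [← this, hc] at hsplit
        linear_combination hsplit
      have hK : ∀ r : ℝ, Kk c μ h (t, r)
          = (Ioi t).indicator (fun r => Complex.exp ((μ - c) * t) *
              (Complex.exp (c * r) * h r)) r := by
        intro r
        by_cases hr : r ∈ Ioi t
        · rw [Set.indicator_of_mem hr, Kk, Set.indicator_of_mem (by exact ⟨ht, hr⟩)]
        · rw [Set.indicator_of_notMem hr, Kk,
            Set.indicator_of_notMem (fun hmem => hr hmem.2)]
      rw [integral_congr_ae (ae_of_all _ hK), integral_indicator measurableSet_Ioi,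
        integral_const_mul]
      rw [Dop, hG]
      rw [show Complex.exp (μ * (t:ℂ)) *
            (-Complex.exp (-(c * (t:ℝ))) * -∫ r in Ioi t, Complex.exp (c * r) * h r)
          = (Complex.exp (μ * (t:ℂ)) * Complex.exp (-(c * (t:ℝ)))) *
            ∫ r in Ioi t, Complex.exp (c * r) * h r from by ring, ← Complex.exp_add]
      congr 2
      ring
    · have hK : ∀ r : ℝ, Kk c μ h (t, r) = 0 := by
        intro r
        rw [Kk, Set.indicator_of_notMem (fun hmem => ht hmem.1)]
      rw [integral_congr_ae (ae_of_all _ hK), integral_zero,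
        Dop, Dop_inner_eq_zero_of_nonpos hh (not_le.1 ht).le, mul_zero, mul_zero]
  -- step 2 : pointwise identity in r
  have step2 : ∀ r : ℝ, (∫ t : ℝ, Kk c μ h (t, r))
      = (∫ x in (0:ℝ)..r, Complex.exp ((μ - c) * x)) * (Complex.exp (c * r) * h r) := by
    intro r
    by_cases hr : r ∈ Ioc (0:ℝ) M
    · have hK : ∀ t : ℝ, Kk c μ h (t, r)
          = (Ico (0:ℝ) r).indicator (fun x => Complex.exp ((μ - c) * x)) t *
              (Complex.exp (c * r) * h r) := by
        intro t
        by_cases htr : t ∈ Ico (0:ℝ) r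
        · rw [Set.indicator_of_mem htr, Kk, Set.indicator_of_mem (by exact ⟨htr.1, htr.2⟩)]
        · rw [Set.indicator_of_notMem htr, Kk,
            Set.indicator_of_notMem (fun hmem => htr ⟨hmem.1, hmem.2⟩), zero_mul]
      rw [integral_congr_ae (ae_of_all _ hK), integral_mul_const,
        integral_indicator measurableSet_Ico]
      congr 1
      rw [MeasureTheory.integral_Ico_eq_integral_Ioo,
        ← MeasureTheory.integral_Ioc_eq_integral_Ioo,
        ← intervalIntegral.integral_of_le hr.1.le]
    · have hzero : h r = 0 := hh.2.2 r hr
      have hK : ∀ t : ℝ, Kk c μ h (t, r) = 0 := by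
        intro t
        rw [Kk]
        by_cases hmem : (t, r) ∈ {p : ℝ × ℝ | 0 ≤ p.1 ∧ p.1 < p.2}
        · rw [Set.indicator_of_mem hmem, hzero, mul_zero, mul_zero]
        · rw [Set.indicator_of_notMem hmem]
      rw [integral_congr_ae (ae_of_all _ hK), integral_zero, hzero, mul_zero, mul_zero]
  -- assemble
  have swap := MeasureTheory.integral_integral_swap (f := fun t r => Kk c μ h (t, r))
    (by exact hKint)
  calc Tr (Dop c h) μ = ∫ t : ℝ, ∫ r : ℝ, Kk c μ h (t, r) := by
        exact integral_congr_ae (ae_of_all _ step1)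
  _ = ∫ r : ℝ, ∫ t : ℝ, Kk c μ h (t, r) := swap
  _ = _ := integral_congr_ae (ae_of_all _ step2)


include hh hc in
lemma Tr_dop_ne {μ : ℂ} (hne : μ ≠ c) : Tr (Dop c h) μ = Tr h μ / (μ - c) := by
  have hsub : μ - c ≠ 0 := sub_ne_zero.2 hne
  rw [Tr_dop_core hh hc μ]
  have hpt : ∀ r : ℝ, (∫ x in (0:ℝ)..r, Complex.exp ((μ - c) * x)) *
      (Complex.exp (c * r) * h r)
      = (μ - c)⁻¹ * (Complex.exp (μ * r) * h r - Complex.exp (c * r) * h r) := by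
    intro r
    rw [integral_exp_mul_complex hsub]
    have h2 : Complex.exp ((μ - c) * ((0:ℝ):ℂ)) = 1 := by
      simp
    have h1 : Complex.exp ((μ - c) * r) * Complex.exp (c * r) = Complex.exp (μ * r) := by
      rw [← Complex.exp_add]; congr 1; ring
    rw [h2, div_eq_inv_mul, ← h1]
    ring
  rw [integral_congr_ae (ae_of_all _ hpt), integral_const_mul,
    integral_sub (hh.integrable_exp μ) (hh.integrable_exp c)]
  have : Tr h c = ∫ t : ℝ, Complex.exp (c * t) * h t := rfl
  rw [show (∫ t : ℝ, Complex.exp (c * t) * h t) = Tr h c from rfl, hc]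
  rw [show (∫ t : ℝ, Complex.exp (μ * t) * h t) = Tr h μ from rfl]
  rw [sub_zero, div_eq_inv_mul]


end Dop2

lemma Nice.sub (hh : Nice M h) (hg : Nice M g) : Nice M (h - g) := by
  obtain ⟨h1, ⟨C1, hC1⟩, h3⟩ := hh
  obtain ⟨g1, ⟨C2, hC2⟩, g3⟩ := hg
  refine ⟨h1.sub g1, ⟨C1 + C2, fun t => ?_⟩, fun t ht => ?_⟩
  · exact (norm_sub_le _ _).trans (add_le_add (hC1 t) (hC2 t))
  · show h t - g t = 0
    rw [h3 t ht, g3 t ht, sub_zero]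

lemma Nice.cmul (hh : Nice M h) (z : ℂ) : Nice M (fun t => z * h t) := by
  obtain ⟨h1, ⟨C1, hC1⟩, h3⟩ := hh
  refine ⟨h1.const_mul z, ⟨‖z‖ * C1, fun t => ?_⟩, fun t ht => ?_⟩
  · rw [norm_mul]
    exact mul_le_mul_of_nonneg_left (hC1 t) (norm_nonneg _)
  · show z * h t = 0
    rw [h3 t ht, mul_zero]

lemma Tr_sub (hh : Nice M h) (hg : Nice M g) (μ : ℂ) :
    Tr (h - g) μ = Tr h μ - Tr g μ := by
  unfold Tr
  rw [← integral_sub (hh.integrable_exp μ) (hg.integrable_exp μ)]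
  congr 1
  funext t
  show Complex.exp (μ * t) * (h t - g t) = _
  ring

lemma Tr_cmul (z : ℂ) (μ : ℂ) : Tr (fun t => z * h t) μ = z * Tr h μ := by
  unfold Tr
  rw [← integral_const_mul]
  congr 1
  funext t
  ring

/-- the factor operator -/
def Fac (δ : ℝ) (z : ℂ) (h : ℝ → ℂ) : ℝ → ℂ :=
  (Sh (1+δ) h - Sh 1 h) - fun t => z * Dop 0 (Sh δ h - h) t

variable {δ : ℝ} (hδ : 0 < δ)

include hδ in
lemma tr_diff_zero (hh : Nice M h) : Tr (Sh δ h - h) 0 = 0 := by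
  rw [Tr_sub (hh.sh hδ.le) (hh.mono (by linarith)), Tr_sh hh]
  simp

include hδ in
lemma Nice.fac (hh : Nice M h) (z : ℂ) (hM : 0 ≤ M) : Nice (M + 1 + δ) (Fac δ z h) := by
  have h1 : Nice (M + 1 + δ) (Sh (1+δ) h) := by
    have := hh.sh (s := 1 + δ) (by linarith)
    exact this.mono (by linarith)
  have h2 : Nice (M + 1 + δ) (Sh 1 h) := (hh.sh (s := 1) one_pos.le).mono (by linarith)
  have h3 : Nice (M + δ) (Sh δ h - h) := ((hh.sh hδ.le).sub (hh.mono (by linarith)))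
  have h4 := (h3.dop (tr_diff_zero hδ hh)).cmul z
  exact (h1.sub h2).sub (h4.mono (by linarith))

include hδ in
lemma Tr_fac (hh : Nice M h) (z : ℂ) {μ : ℂ} (hμ : μ ≠ 0) :
    Tr (Fac δ z h) μ
      = (μ * Complex.exp μ - z) * ((Complex.exp (δ * μ) - 1) / μ) * Tr h μ := by
  have h1 : Nice (M + 1 + δ) (Sh (1+δ) h) := (hh.sh (s := 1+δ) (by linarith)).mono (by linarith)
  have h2 : Nice (M + 1 + δ) (Sh 1 h) := (hh.sh (s := 1) one_pos.le).mono (by linarith)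
  have h3 : Nice (M + δ) (Sh δ h - h) := ((hh.sh hδ.le).sub (hh.mono (by linarith)))
  have h4 := (h3.dop (tr_diff_zero hδ hh)).cmul z
  rw [Fac, Tr_sub (h1.sub h2) (h4.mono (by linarith)), Tr_sub h1 h2,
    Tr_sh hh, Tr_sh hh, Tr_cmul,
    Tr_dop_ne h3 (tr_diff_zero hδ hh) hμ,
    Tr_sub (hh.sh hδ.le) (hh.mono (by linarith)), Tr_sh hh]
  have e1 : Complex.exp ((1+δ : ℝ) * μ) = Complex.exp μ * Complex.exp (δ * μ) := by
    rw [← Complex.exp_add]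
    congr 1
    push_cast
    ring
  have e2 : Complex.exp ((1:ℝ) * μ) = Complex.exp μ := by norm_num
  rw [e1, e2, sub_zero]
  field_simp


def Iter (δ : ℝ) (b : ℕ → ℂ) : ℕ → (ℝ → ℂ)
  | 0 => (Ioc (0:ℝ) δ).indicator 1
  | (k+1) => Fac δ (b k) (Iter δ b k)

include hδ in
lemma nice_iter (b : ℕ → ℂ) (k : ℕ) : Nice (δ + k * (1 + δ)) (Iter δ b k) := by
  induction k with
  | zero =>
    simp only [Iter, Nat.cast_zero, zero_mul, add_zero]
    refine ⟨measurable_one.indicator measurableSet_Ioc, ⟨1, fun t => ?_⟩, fun t ht => ?_⟩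
    · by_cases ht : t ∈ Ioc (0:ℝ) δ
      · rw [Set.indicator_of_mem ht]; simp
      · rw [Set.indicator_of_notMem ht]; simp
    · exact Set.indicator_of_notMem ht _
  | succ k ih =>
    have h0 : (0:ℝ) ≤ δ + k * (1+δ) := by positivity
    have := (ih.fac hδ (b k) h0)
    apply this.mono
    push_cast
    ring_nf
    linarith

include hδ in
lemma tr_iter_zero {μ : ℂ} (hμ : μ ≠ 0) (b : ℕ → ℂ) :
    Tr (Iter δ b 0) μ = (Complex.exp (δ * μ) - 1) / μ := by
  show (∫ t : ℝ, Complex.exp (μ * t) * (Ioc (0:ℝ) δ).indicator 1 t) = _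
  have : ∀ t : ℝ, Complex.exp (μ * t) * (Ioc (0:ℝ) δ).indicator 1 t
      = (Ioc (0:ℝ) δ).indicator (fun t : ℝ => Complex.exp (μ * t)) t := by
    intro t
    by_cases ht : t ∈ Ioc (0:ℝ) δ
    · rw [Set.indicator_of_mem ht, Set.indicator_of_mem ht]; simp
    · rw [Set.indicator_of_notMem ht, Set.indicator_of_notMem ht]; simp
  rw [integral_congr_ae (ae_of_all _ this), integral_indicator measurableSet_Ioc,
    ← intervalIntegral.integral_of_le hδ.le, integral_exp_mul_complex hμ]
  simp [mul_comm]

include hδ in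
lemma tr_iter (b : ℕ → ℂ) (k : ℕ) {μ : ℂ} (hμ : μ ≠ 0) :
    Tr (Iter δ b k) μ
      = (∏ i ∈ Finset.range k, (μ * Complex.exp μ - b i)) *
          ((Complex.exp (δ * μ) - 1) / μ) ^ k * ((Complex.exp (δ * μ) - 1) / μ) := by
  induction k with
  | zero => simpa using tr_iter_zero hδ hμ b
  | succ k ih =>
    show Tr (Fac δ (b k) (Iter δ b k)) μ = _
    rw [Tr_fac hδ (nice_iter hδ b k) (b k) hμ, ih, Finset.prod_range_succ]
    ring


lemma eq_at_of_eventuallyEq_nhdsNE {f g : ℂ → ℂ} {x : ℂ} (hf : ContinuousAt f x)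
    (hg : ContinuousAt g x) (hfg : ∀ᶠ z in 𝓝[≠] x, f z = g z) : f x = g x := by
  have h1 : Filter.Tendsto f (𝓝[≠] x) (𝓝 (f x)) := hf.tendsto.mono_left nhdsWithin_le_nhds
  have h2 : Filter.Tendsto g (𝓝[≠] x) (𝓝 (g x)) := hg.tendsto.mono_left nhdsWithin_le_nhds
  have h3 : Filter.Tendsto g (𝓝[≠] x) (𝓝 (f x)) := h1.congr' hfg
  exact tendsto_nhds_unique h3 h2

lemma cascade {l0 : ℂ} (k : ℕ) :
    ∀ ψ : ℝ → ℂ, Nice M ψ →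
    ∀ u : ℂ → ℂ, ContinuousAt u l0 → u l0 ≠ 0 →
    (∀ᶠ z in 𝓝 l0, Tr ψ z = (z - l0) ^ k * u z) →
    ∃ η : ℝ → ℂ, Nice M η ∧ (∀ μ : ℂ, μ ≠ l0 → Tr η μ = Tr ψ μ / (μ - l0) ^ k) ∧
      Tr η l0 ≠ 0 := by
  induction k with
  | zero =>
    intro ψ hψ u hu hu0 hfac
    refine ⟨ψ, hψ, fun μ _ => by simp, ?_⟩
    have h1 := hfac.self_of_nhds
    simp only [sub_self, pow_zero, one_mul] at h1
    rw [h1]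
    exact hu0
  | succ k ih =>
    intro ψ hψ u hu hu0 hfac
    have hval : Tr ψ l0 = 0 := by
      have := hfac.self_of_nhds
      simpa using this
    set ψ' := Dop l0 ψ with hψ'def
    have hψ' : Nice M ψ' := hψ.dop hval
    have hfac' : ∀ᶠ z in 𝓝 l0, Tr ψ' z = (z - l0) ^ k * u z := by
      have hne : ∀ᶠ z in 𝓝[≠] l0, Tr ψ' z = (z - l0) ^ k * u z := by
        filter_upwards [hfac.filter_mono nhdsWithin_le_nhds, self_mem_nhdsWithin]
          with z hz hz'
        have hzne : z ≠ l0 := hz'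
        rw [Tr_dop_ne hψ hval hzne, hz, pow_succ]
        have hzs : z - l0 ≠ 0 := sub_ne_zero.2 hzne
        field_simp
      have hat : Tr ψ' l0 = (fun z => (z - l0) ^ k * u z) l0 :=
        eq_at_of_eventuallyEq_nhdsNE (hψ'.continuous_Tr.continuousAt)
          (ContinuousAt.mul (by fun_prop) hu) hne
      rw [← nhdsNE_sup_pure, eventually_sup]
      exact ⟨hne, by simpa using hat⟩
    obtain ⟨η, hη, hform, hnz⟩ := ih ψ' hψ' u hu hu0 hfac'
    refine ⟨η, hη, fun μ hμ => ?_, hnz⟩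
    rw [hform μ hμ, Tr_dop_ne hψ hval hμ, pow_succ, div_div, mul_comm]


lemma factor_not_evzero (z0 w : ℂ) : ¬ (∀ᶠ z in 𝓝 z0, z * Complex.exp z - w = 0) := by
  intro hev
  have hev' : (fun z : ℂ => z * Complex.exp z - w) =ᶠ[𝓝 z0] (fun _ => (0:ℂ)) := hev
  have hder := hev'.deriv
  have hder' : ∀ᶠ z in 𝓝 z0, Complex.exp z + z * Complex.exp z = 0 := by
    filter_upwards [hder] with z hz
    have h1 : HasDerivAt (fun z : ℂ => z * Complex.exp z - w)
        (1 * Complex.exp z + z * Complex.exp z) z :=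
      ((hasDerivAt_id z).mul (Complex.hasDerivAt_exp z)).sub_const w
    rw [h1.deriv] at hz
    rw [deriv_const] at hz
    rw [← hz]
    ring
  have hm1 : ∀ᶠ z : ℂ in 𝓝 z0, z = -1 := by
    filter_upwards [hder'] with z hz
    have hexp : Complex.exp z ≠ 0 := Complex.exp_ne_zero z
    have : Complex.exp z * (1 + z) = 0 := by linear_combination hz
    rcases mul_eq_zero.1 this with h | h
    · exact absurd h hexp
    · linear_combination h
  obtain ⟨ε, hε, H⟩ := Metric.eventually_nhds_iff.1 hm1
  have h1 : z0 = -1 := H (by simp [hε])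
  have h2 : z0 + (ε/2 : ℝ) = -1 := by
    apply H
    rw [dist_eq_norm]
    simp only [add_sub_cancel_left]
    rw [Complex.norm_real, Real.norm_eq_abs, abs_of_pos (by linarith)]
    linarith
  rw [h1] at h2
  have : ((ε/2 : ℝ) : ℂ) = 0 := by linear_combination h2
  have := Complex.ofReal_eq_zero.1 this
  linarith


theorem exists_eta (n : ℕ) (T : ℝ) (hT : (n : ℝ) < T) (a : Fin n → ℝ)
    (ha0 : ∀ j, a j ≠ 0) (l0 : ℂ) (hl0 : ∃ j, l0 * Complex.exp l0 = (a j : ℝ)) :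
    ∃ (η : ℝ → ℂ) (M : ℝ), 0 < M ∧ M < T ∧ Nice M η ∧ Tr η l0 ≠ 0 ∧
      ∀ μ : ℂ, (∃ j, μ * Complex.exp μ = (a j : ℝ)) → μ ≠ l0 → Tr η μ = 0 := by
  obtain ⟨j0, hj0⟩ := hl0
  have hl0ne : l0 ≠ 0 := by
    intro hc
    rw [hc, zero_mul] at hj0
    exact ha0 j0 (by exact_mod_cast hj0.symm)
  -- choose δ
  set δ : ℝ := min ((T - n) / (2 * (n + 1))) (Real.pi / (‖l0‖ + 1)) with hδdef
  have hTn : 0 < T - (n:ℝ) := by linarith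
  have hδ : 0 < δ := by
    apply lt_min
    · positivity
    · positivity
  have hδ1 : δ ≤ (T - n) / (2 * (n + 1)) := min_le_left _ _
  have hδ2 : δ ≤ Real.pi / (‖l0‖ + 1) := min_le_right _ _
  have hexpδ : Complex.exp (δ * l0) ≠ 1 := by
    intro hc
    obtain ⟨m, hm⟩ := Complex.exp_eq_one_iff.1 hc
    have habs : ‖(δ : ℂ) * l0‖ = δ * ‖l0‖ := by
      rw [norm_mul, Complex.norm_real, Real.norm_eq_abs, abs_of_pos hδ]
    have hsmall : ‖(δ : ℂ) * l0‖ < 2 * Real.pi := by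
      rw [habs]
      have h1 : δ * ‖l0‖ ≤ (Real.pi / (‖l0‖ + 1)) * ‖l0‖ :=
        mul_le_mul_of_nonneg_right hδ2 (norm_nonneg _)
      have h2 : (Real.pi / (‖l0‖ + 1)) * ‖l0‖ < Real.pi := by
        rw [div_mul_eq_mul_div, div_lt_iff₀ (by positivity)]
        nlinarith [Real.pi_pos, norm_nonneg l0]
      nlinarith [Real.pi_pos]
    rw [hm] at hsmall
    have hn2 : ‖(2 * (Real.pi : ℂ) * Complex.I)‖ = 2 * Real.pi := by
      simp [Complex.norm_I, abs_of_pos Real.pi_pos]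
    rw [norm_mul, hn2] at hsmall
    have hm0 : m = 0 := by
      by_contra hm0
      have h1 : (1:ℝ) ≤ ‖(m:ℂ)‖ := by
        rw [Complex.norm_intCast]
        have : (1:ℝ) ≤ |(m:ℝ)| := by
          rw [← Int.cast_abs]
          exact_mod_cast Int.one_le_abs (by omega)
        simpa [Int.norm_eq_abs] using this
      nlinarith [Real.pi_pos]
    rw [hm0] at hm
    simp at hm
    rcases hm with hm | hm
    · exact absurd hm (by positivity)
    · exact hl0ne hm
  -- the base function and coefficients
  set b : ℕ → ℂ := fun i => if h : i < n then ((a ⟨i, h⟩ : ℝ) : ℂ) else 0 with hbdef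
  set ψ : ℝ → ℂ := Iter δ b n with hψdef
  set M : ℝ := δ + n * (1 + δ) with hMdef
  have hψ : Nice M ψ := nice_iter hδ b n
  have hMpos : 0 < M := by positivity
  have hMT : M < T := by
    have : δ * (n + 1) ≤ (T - n) / 2 := by
      calc δ * (n+1) ≤ (T - n) / (2 * (n + 1)) * (n+1) :=
        mul_le_mul_of_nonneg_right hδ1 (by positivity)
      _ = (T - n) / 2 := by
        have : ((n:ℝ) + 1) ≠ 0 := by positivity
        field_simp
    have hn0 : (0:ℝ) ≤ n := Nat.cast_nonneg n
    nlinarith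
  -- q z
  set q : ℂ → ℂ := fun z => (Complex.exp (δ * z) - 1) / z with hqdef
  have hql0 : q l0 ≠ 0 := div_ne_zero (sub_ne_zero.2 hexpδ) hl0ne
  set P : ℂ → ℂ := fun z => ∏ i ∈ Finset.range n, (z * Complex.exp z - b i) with hPdef
  have htr : ∀ μ : ℂ, μ ≠ 0 → Tr ψ μ = P μ * q μ ^ n * q μ := fun μ hμ => tr_iter hδ b n hμ
  -- eventual nonvanishing of Tr ψ on punctured nhds
  have hev_ne : ∀ᶠ z in 𝓝[≠] l0, Tr ψ z ≠ 0 := by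
    have e1 : ∀ᶠ z in 𝓝 l0, z ≠ (0:ℂ) := eventually_ne_nhds hl0ne
    have e2 : ∀ᶠ z in 𝓝 l0, Complex.exp (δ * z) - 1 ≠ 0 := by
      apply ContinuousAt.eventually_ne (by fun_prop)
      exact sub_ne_zero.2 hexpδ
    have e3 : ∀ᶠ z in 𝓝[≠] l0, ∀ i ∈ Finset.range n, z * Complex.exp z - b i ≠ 0 := by
      rw [eventually_all_finset]
      intro i _
      have hananl : AnalyticAt ℂ (fun z : ℂ => z * Complex.exp z - b i) l0 := by
        apply AnalyticAt.sub
        · exact (analyticAt_id.mul (Complex.differentiable_exp.analyticAt _))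
        · exact analyticAt_const
      rcases hananl.eventually_eq_zero_or_eventually_ne_zero with hc | hc
      · exact absurd hc (factor_not_evzero l0 (b i))
      · exact hc
    filter_upwards [e1.filter_mono nhdsWithin_le_nhds, e2.filter_mono nhdsWithin_le_nhds, e3]
      with z h1 h2 h3
    rw [htr z h1]
    have hq : q z ≠ 0 := div_ne_zero h2 h1
    have hP : P z ≠ 0 := Finset.prod_ne_zero_iff.2 h3
    exact mul_ne_zero (mul_ne_zero hP (pow_ne_zero _ hq)) hq
  -- factorization
  have hnotev : ¬ ∀ᶠ z in 𝓝 l0, Tr ψ z = 0 := by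
    intro hc
    obtain ⟨z, hz1, hz2⟩ := ((hc.filter_mono nhdsWithin_le_nhds).and hev_ne).exists
    exact hz2 hz1
  have han : AnalyticAt ℂ (Tr ψ) l0 := by
    have : Differentiable ℂ (Tr ψ) := fun μ => (hψ.hasDerivAt_Tr μ).differentiableAt
    exact this.analyticAt l0
  obtain ⟨k, u, hu_an, hu0, hfac⟩ := (han.exists_eventuallyEq_pow_smul_nonzero_iff).2 hnotev
  have hfac' : ∀ᶠ z in 𝓝 l0, Tr ψ z = (z - l0) ^ k * u z := by
    filter_upwards [hfac] with z hz
    rw [hz, smul_eq_mul]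
  obtain ⟨η, hη, hform, hnz⟩ := cascade k ψ hψ u hu_an.continuousAt hu0 hfac'
  refine ⟨η, M, hMpos, hMT, hη, hnz, fun μ hμroot hμne => ?_⟩
  obtain ⟨j, hj⟩ := hμroot
  have hμ0 : μ ≠ 0 := by
    intro hc
    rw [hc, zero_mul] at hj
    exact ha0 j (by exact_mod_cast hj.symm)
  rw [hform μ hμne, htr μ hμ0]
  have hPz : P μ = 0 := by
    apply Finset.prod_eq_zero (Finset.mem_range.2 j.isLt)
    have hb : b (j:ℕ) = ((a j : ℝ) : ℂ) := by
      rw [hbdef]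
      simp [j.isLt]
    rw [hb, hj, sub_self]
  rw [hPz, zero_mul, zero_mul, zero_div]

end S12

open S12 in
theorem stmt12 (n : ℕ) (hn : 1 ≤ n) (a : Fin n → ℝ)
    (ha0 : ∀ j, a j ≠ 0) (hainj : Function.Injective a)
    (T : ℝ) (hT : (n : ℝ) < T) :
    -- minimality: each exponential `e^{λ₀ t}` with `λ₀ e^{λ₀} = a_j` stays at a positive
    -- `L²(0,T)`-distance from the linear span of the remaining members of the family
    ∀ lam0 : ℂ, (∃ j, lam0 * Complex.exp lam0 = (a j : ℂ)) →
      ∃ ε : ℝ, 0 < ε ∧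
        ∀ (s : Finset ℂ) (c : ℂ → ℂ),
          (∀ mu ∈ s, (∃ j, mu * Complex.exp mu = (a j : ℂ)) ∧ mu ≠ lam0) →
          ε ≤ ∫ t in Ioo (0:ℝ) T,
                ‖Complex.exp (lam0 * t)
                  - ∑ mu ∈ s, c mu * Complex.exp (mu * t)‖ ^ 2 := by
  intro l0 hl0
  obtain ⟨η, M, hMpos, hMT, hη, hnz, hvanish⟩ := exists_eta n T hT a ha0 l0 hl0
  have hT0 : (0:ℝ) < T := lt_of_le_of_lt (Nat.cast_nonneg n) hT
  set ν : Measure ℝ := volume.restrict (Ioo (0:ℝ) T) with hνdef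
  haveI : IsFiniteMeasure ν := by
    constructor
    rw [hνdef, Measure.restrict_apply_univ]
    exact measure_Ioo_lt_top
  obtain ⟨Cη, hCη⟩ := hη.2.1
  -- key pairing identity
  have hpair : ∀ (s : Finset ℂ) (c : ℂ → ℂ),
      (∀ mu ∈ s, (∃ j, mu * Complex.exp mu = (a j : ℝ)) ∧ mu ≠ l0) →
      (∫ t in Ioo (0:ℝ) T,
        (Complex.exp (l0 * t) - ∑ mu ∈ s, c mu * Complex.exp (mu * t)) * η t)
        = Tr η l0 := by
    intro s c hs
    set f : ℝ → ℂ := fun t =>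
      Complex.exp (l0 * t) - ∑ mu ∈ s, c mu * Complex.exp (mu * t) with hfdef
    have hzero : ∀ t, t ∉ Ioo (0:ℝ) T → f t * η t = 0 := by
      intro t ht
      have : η t = 0 := by
        apply hη.2.2
        intro hmem
        exact ht ⟨hmem.1, lt_of_le_of_lt hmem.2 hMT⟩
      rw [this, mul_zero]
    rw [setIntegral_eq_integral_of_forall_compl_eq_zero hzero]
    have hint1 : Integrable (fun t : ℝ => Complex.exp (l0 * t) * η t) := hη.integrable_exp l0
    have hint2 : Integrable (fun t : ℝ => ∑ mu ∈ s, c mu * (Complex.exp (mu * t) * η t)) :=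
      integrable_finset_sum s (fun mu _ => (hη.integrable_exp mu).const_mul (c mu))
    have heq : ∀ t : ℝ, f t * η t
        = Complex.exp (l0 * t) * η t - ∑ mu ∈ s, c mu * (Complex.exp (mu * t) * η t) := by
      intro t
      rw [hfdef]
      simp only [Finset.sum_mul, sub_mul]
      congr 1
      apply Finset.sum_congr rfl
      intro mu _
      ring
    rw [integral_congr_ae (ae_of_all _ heq), integral_sub hint1 hint2,
      integral_finset_sum s (fun mu _ => (hη.integrable_exp mu).const_mul (c mu))]
    have : ∀ mu ∈ s, (∫ t : ℝ, c mu * (Complex.exp (mu * t) * η t)) = 0 := by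
      intro mu hmu
      rw [integral_const_mul]
      have := hvanish mu (hs mu hmu).1 (hs mu hmu).2
      rw [show (∫ t : ℝ, Complex.exp (mu * t) * η t) = Tr η mu from rfl, this, mul_zero]
    rw [Finset.sum_congr rfl this, Finset.sum_const, smul_zero, sub_zero]
    rfl
  -- L² machinery
  have hηmem : MemLp η (ENNReal.ofReal 2) ν :=
    MemLp.of_bound hη.1.aestronglyMeasurable.restrict Cη (ae_of_all _ hCη)
  set Y : ℝ := ∫ t in Ioo (0:ℝ) T, ‖η t‖ ^ (2:ℝ) with hYdef
  have hYnn : 0 ≤ Y := integral_nonneg fun t => Real.rpow_nonneg (norm_nonneg _) _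
  -- generic Cauchy-Schwarz step
  have hCS : ∀ (s : Finset ℂ) (c : ℂ → ℂ),
      (∀ mu ∈ s, (∃ j, mu * Complex.exp mu = (a j : ℝ)) ∧ mu ≠ l0) →
      ‖Tr η l0‖ ≤ (∫ t in Ioo (0:ℝ) T,
          ‖Complex.exp (l0 * t) - ∑ mu ∈ s, c mu * Complex.exp (mu * t)‖ ^ (2:ℝ)) ^ ((1:ℝ)/2)
          * Y ^ ((1:ℝ)/2) := by
    intro s c hs
    set f : ℝ → ℂ := fun t =>
      Complex.exp (l0 * t) - ∑ mu ∈ s, c mu * Complex.exp (mu * t) with hfdef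
    have hfc : Continuous f := by
      apply Continuous.sub
      · fun_prop
      · apply continuous_finset_sum
        intro mu _
        fun_prop
    obtain ⟨Cf, hCf⟩ : ∃ Cf, ∀ t ∈ Icc (0:ℝ) T, ‖f t‖ ≤ Cf :=
      isCompact_Icc.exists_bound_of_continuousOn hfc.continuousOn
    have hfmem : MemLp f (ENNReal.ofReal 2) ν := by
      apply MemLp.of_bound hfc.aestronglyMeasurable.restrict Cf
      refine (ae_restrict_iff' measurableSet_Ioo).2 (ae_of_all _ fun t ht => ?_)
      exact hCf t ⟨ht.1.le, ht.2.le⟩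
    have h2 : (2:ℝ).HolderConjugate 2 := ⟨by norm_num, by norm_num, by norm_num⟩
    have key := MeasureTheory.integral_mul_norm_le_Lp_mul_Lq (μ := ν) h2 hfmem hηmem
    calc ‖Tr η l0‖ = ‖∫ t in Ioo (0:ℝ) T, f t * η t‖ := by rw [hpair s c hs]
    _ ≤ ∫ t in Ioo (0:ℝ) T, ‖f t * η t‖ := norm_integral_le_integral_norm _
    _ = ∫ t in Ioo (0:ℝ) T, ‖f t‖ * ‖η t‖ := by
        congr 1
        funext t
        rw [norm_mul]
    _ ≤ _ := key
  -- positivity of Y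
  have hYpos : 0 < Y := by
    rcases lt_or_eq_of_le hYnn with h | h
    · exact h
    · exfalso
      have h0 := hCS ∅ 0 (by simp)
      rw [← h, Real.zero_rpow (by norm_num), mul_zero] at h0
      exact hnz (norm_le_zero_iff.1 h0)
  refine ⟨‖Tr η l0‖ ^ 2 / Y, div_pos (pow_pos (norm_pos_iff.2 hnz) 2) hYpos, ?_⟩
  intro s c hs
  set X : ℝ := ∫ t in Ioo (0:ℝ) T,
      ‖Complex.exp (l0 * t) - ∑ mu ∈ s, c mu * Complex.exp (mu * t)‖ ^ (2:ℝ) with hXdef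
  have hXnn : 0 ≤ X := integral_nonneg fun t => Real.rpow_nonneg (norm_nonneg _) _
  have hle := hCS s c hs
  have hsq : ‖Tr η l0‖ ^ 2 ≤ X * Y := by
    have h1 : ‖Tr η l0‖ ^ 2 ≤ (X ^ ((1:ℝ)/2) * Y ^ ((1:ℝ)/2)) ^ 2 := by
      apply pow_le_pow_left₀ (norm_nonneg _) hle
    calc ‖Tr η l0‖ ^ 2 ≤ (X ^ ((1:ℝ)/2) * Y ^ ((1:ℝ)/2)) ^ 2 := h1
    _ = (X ^ ((1:ℝ)/2)) ^ 2 * (Y ^ ((1:ℝ)/2)) ^ 2 := by ring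
    _ = X * Y := by
        rw [← Real.rpow_natCast (X ^ ((1:ℝ)/2)) 2, ← Real.rpow_natCast (Y ^ ((1:ℝ)/2)) 2,
          ← Real.rpow_mul hXnn, ← Real.rpow_mul hYnn]
        norm_num
  have hfinal : ‖Tr η l0‖ ^ 2 / Y ≤ X := by
    rw [div_le_iff₀ hYpos]
    exact hsq
  refine hfinal.trans (le_of_eq ?_)
  rw [hXdef]
  congr 1
  funext t
  rw [show (2:ℝ) = ((2:ℕ):ℝ) from by norm_num, Real.rpow_natCast]
end
end

section
/- Let n ≥ 1, α ∈ (−1, 0], let A₋₁, A₁ ∈ ℂ^{n×n} and let A₂, A₃ ∈ L²((−1,0); ℂ^{n×n}) vanish almost everywhere on (−1, α). Set Δ(λ) = −λI + λ e^{−λ} A₋₁ + e^{−λ} A₁ + ∫_{−1}^0 (λ e^{λs} A₂(s) + e^{λs} A₃(s)) ds and f₂(λ) = det Δ(λ) − det(A₁ + λ A₋₁)·e^{−nλ}. Then limsup_{r→+∞} (1/r)·log|f₂(−r)| ≤ n − 1 − α; in particular this limsup is strictly less than n. -/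
open MeasureTheory Set Filter

noncomputable section

/-- the characteristic matrix
`Δ(λ) = -λI + λ e^{-λ} A₋₁ + e^{-λ} A₁ + ∫_{-1}^0 (λ e^{λs} A₂(s) + e^{λs} A₃(s)) ds` -/
def Delta (n : ℕ) (Am1 A1 : Matrix (Fin n) (Fin n) ℂ)
    (A2 A3 : ℝ → Matrix (Fin n) (Fin n) ℂ) (lam : ℂ) : Matrix (Fin n) (Fin n) ℂ :=
  Matrix.of (fun i j =>
    -lam * (if i = j then 1 else 0) + lam * Complex.exp (-lam) * Am1 i j
      + Complex.exp (-lam) * A1 i j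
      + ∫ s in Ioo (-1:ℝ) 0,
          (lam * Complex.exp (lam * s) * A2 s i j + Complex.exp (lam * s) * A3 s i j))

/-- `f₂(λ) = det Δ(λ) - det(A₁ + λ A₋₁) e^{-nλ}` -/
def ftwo (n : ℕ) (Am1 A1 : Matrix (Fin n) (Fin n) ℂ)
    (A2 A3 : ℝ → Matrix (Fin n) (Fin n) ℂ) (lam : ℂ) : ℂ :=
  (Delta n Am1 A1 A2 A3 lam).det - (A1 + lam • Am1).det * Complex.exp (-(n : ℂ) * lam)

/-!
At `λ = -r` the characteristic matrix splits as `Δ(λ) = P + Q` with `P = e^{r} (A₁ - r A₋₁)`,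
whose determinant is exactly the subtracted term `det(A₁ + λ A₋₁) e^{-nλ}`, and
`Q = r I + ∫_{-1}^0 e^{-rs} (-r A₂(s) + A₃(s)) ds`. The entries of `P` are `O((1 + r) e^{r})`;
since the kernels vanish on `(-1, α)`, those of `Q` are `O((1 + r) e^{-αr})`. Every term of
`det(P + Q) - det P` contains an entry of `Q`, so `|f₂(-r)| ≤ K (1 + r)^n e^{(n - 1 - α) r}`,
and the polynomial factor does not affect the exponential growth rate.
-/

open Topology

section Perturbation

variable {ι R : Type*} [NormedCommRing R] [NormOneClass R]

theorem Finset.norm_prod_add_sub_prod_le [DecidableEq ι] (s : Finset ι) {p q : ι → R} {b d : ℝ}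
    (hp : ∀ i ∈ s, ‖p i‖ ≤ b) (hq : ∀ i ∈ s, ‖q i‖ ≤ d) :
    ‖∏ i ∈ s, (p i + q i) - ∏ i ∈ s, p i‖ ≤ (b + d) ^ s.card - b ^ s.card := by
  induction s using Finset.induction_on with
  | empty => simp
  | insert a s ha ih =>
    rw [Finset.forall_mem_insert] at hp hq
    have hb : 0 ≤ b := (norm_nonneg _).trans hp.1
    have hd : 0 ≤ d := (norm_nonneg _).trans hq.1
    have hP : ‖∏ i ∈ s, p i‖ ≤ b ^ s.card :=
      (Finset.norm_prod_le _ _).trans <|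
        (Finset.prod_le_prod (fun _ _ => norm_nonneg _) hp.2).trans_eq (Finset.prod_const b)
    rw [Finset.prod_insert ha, Finset.prod_insert ha, Finset.card_insert_of_notMem ha,
      show ∀ x y X Y : R, (x + y) * X - x * Y = (x + y) * (X - Y) + y * Y by intros; ring]
    calc _ ≤ ‖p a + q a‖ * ‖∏ i ∈ s, (p i + q i) - ∏ i ∈ s, p i‖ + ‖q a‖ * ‖∏ i ∈ s, p i‖ :=
          (norm_add_le _ _).trans (add_le_add (norm_mul_le _ _) (norm_mul_le _ _))
      _ ≤ (b + d) * ((b + d) ^ s.card - b ^ s.card) + d * b ^ s.card := by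
          gcongr
          · exact (norm_add_le _ _).trans (add_le_add hp.1 hq.1)
          · exact ih hp.2 hq.2
          · exact hq.1
      _ = (b + d) ^ (s.card + 1) - b ^ (s.card + 1) := by ring

theorem Matrix.norm_det_add_sub_det_le {n : Type*} [Fintype n] [DecidableEq n]
    {P Q : Matrix n n R} {b d : ℝ} (hP : ∀ i j, ‖P i j‖ ≤ b) (hQ : ∀ i j, ‖Q i j‖ ≤ d) :
    ‖(P + Q).det - P.det‖ ≤
      (Fintype.card n).factorial * ((b + d) ^ Fintype.card n - b ^ Fintype.card n) := by
  rw [Matrix.det_apply, Matrix.det_apply, ← Finset.sum_sub_distrib]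
  calc _ ≤ ∑ σ : Equiv.Perm n, ‖∏ i, (P (σ i) i + Q (σ i) i) - ∏ i, P (σ i) i‖ := by
        refine (norm_sum_le _ _).trans_eq (Finset.sum_congr rfl fun σ _ => ?_)
        simp only [Matrix.add_apply, ← smul_sub, norm_units_zsmul]
    _ ≤ ∑ _σ : Equiv.Perm n, ((b + d) ^ Fintype.card n - b ^ Fintype.card n) :=
        Finset.sum_le_sum fun σ _ =>
          Finset.univ.norm_prod_add_sub_prod_le (fun i _ => hP _ _) (fun i _ => hQ _ _)
    _ = _ := by simp [Fintype.card_perm, mul_sub]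

theorem add_pow_sub_pow_le {b d : ℝ} (hb : 0 ≤ b) (hd : 0 ≤ d) (m : ℕ) :
    (b + d) ^ (m + 1) - b ^ (m + 1) ≤ d * (m + 1 : ℕ) * (b + d) ^ m := by
  have h := abs_pow_sub_pow_le (b + d) b (m + 1)
  rw [add_sub_cancel_left, abs_of_nonneg hd, abs_of_nonneg (add_nonneg hb hd),
    abs_of_nonneg hb, max_eq_left (by linarith), Nat.add_sub_cancel] at h
  exact (le_abs_self _).trans h

end Perturbation

theorem norm_setIntegral_exp_mul_le {a b α r : ℝ} {f : ℝ → ℂ} (hr : 0 ≤ r)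
    (hf : Integrable f (volume.restrict (Ioo a b)))
    (hf0 : ∀ᵐ s ∂volume.restrict (Ioo a α), f s = 0) :
    ‖∫ s in Ioo a b, Complex.exp (-r * s) * f s‖ ≤
      Real.exp (-r * α) * ∫ s in Ioo a b, ‖f s‖ := by
  rw [← integral_const_mul]
  refine norm_integral_le_of_norm_le (hf.norm.const_mul _) ?_
  have hf0' := ae_restrict_of_ae (μ := volume) (s := Ioo a b)
    ((ae_restrict_iff' measurableSet_Ioo).mp hf0)
  filter_upwards [hf0', ae_restrict_mem measurableSet_Ioo] with s hfs hs
  rcases lt_or_ge s α with hsα | hαs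
  · simp [hfs ⟨hs.1, hsα⟩]
  · rw [norm_mul, Complex.norm_exp]
    gcongr
    simpa using mul_le_mul_of_nonneg_left hαs hr

def neutralPart {n : ℕ} (Am1 A1 : Matrix (Fin n) (Fin n) ℂ) (lam : ℂ) :
    Matrix (Fin n) (Fin n) ℂ :=
  Complex.exp (-lam) • (A1 + lam • Am1)

section CharacteristicMatrix

variable {n : ℕ} (Am1 A1 : Matrix (Fin n) (Fin n) ℂ) {A2 A3 : ℝ → Matrix (Fin n) (Fin n) ℂ}

theorem Delta_sub_neutralPart_apply (lam : ℂ) (i j : Fin n) :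
    (Delta n Am1 A1 A2 A3 lam - neutralPart Am1 A1 lam) i j =
      -lam * (if i = j then 1 else 0) +
        ∫ s in Ioo (-1 : ℝ) 0, Complex.exp (lam * s) * (lam * A2 s i j + A3 s i j) := by
  simp only [Delta, neutralPart, Matrix.sub_apply, Matrix.of_apply, Matrix.smul_apply,
    Matrix.add_apply, smul_eq_mul, mul_add, ← mul_assoc, mul_comm _ lam]
  ring

theorem ftwo_eq_det_add_sub_det (lam : ℂ) :
    ftwo n Am1 A1 A2 A3 lam =
      (neutralPart Am1 A1 lam + (Delta n Am1 A1 A2 A3 lam - neutralPart Am1 A1 lam)).det -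
        (neutralPart Am1 A1 lam).det := by
  rw [add_sub_cancel, neutralPart, Matrix.det_smul, Fintype.card_fin, ← Complex.exp_nat_mul, ftwo]
  ring_nf

theorem exists_norm_neutralPart_apply_le :
    ∃ C, 0 ≤ C ∧ ∀ r : ℝ, 0 ≤ r → ∀ i j,
      ‖neutralPart Am1 A1 (-r : ℂ) i j‖ ≤ C * (1 + r) * Real.exp r := by
  obtain ⟨M, hM⟩ := Finite.exists_le fun p : Fin n × Fin n => ‖A1 p.1 p.2‖ + ‖Am1 p.1 p.2‖
  refine ⟨max M 0, le_max_right _ _, fun r hr i j => ?_⟩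
  have hM' : ‖A1 i j‖ + ‖Am1 i j‖ ≤ max M 0 := (hM (i, j)).trans (le_max_left _ _)
  rw [neutralPart, Matrix.smul_apply, smul_eq_mul, norm_mul, neg_neg, Complex.norm_exp_ofReal,
    mul_comm]
  gcongr
  calc ‖(A1 + (-r : ℂ) • Am1) i j‖ ≤ ‖A1 i j‖ + r * ‖Am1 i j‖ := by
        simpa [abs_of_nonneg hr] using norm_add_le (A1 i j) (-(r : ℂ) * Am1 i j)
    _ ≤ (‖A1 i j‖ + ‖Am1 i j‖) * (1 + r) := by
        nlinarith [norm_nonneg (A1 i j), norm_nonneg (Am1 i j)]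
    _ ≤ max M 0 * (1 + r) := by gcongr

theorem exists_norm_Delta_sub_neutralPart_apply_le {α : ℝ} (hα : α ≤ 0)
    (hA2 : ∀ i j, Integrable (fun θ => A2 θ i j) (volume.restrict (Ioo (-1:ℝ) 0)))
    (hA3 : ∀ i j, Integrable (fun θ => A3 θ i j) (volume.restrict (Ioo (-1:ℝ) 0)))
    (hA2v : ∀ᵐ θ ∂(volume.restrict (Ioo (-1:ℝ) α)), A2 θ = 0)
    (hA3v : ∀ᵐ θ ∂(volume.restrict (Ioo (-1:ℝ) α)), A3 θ = 0) :
    ∃ C, 0 ≤ C ∧ ∀ r : ℝ, 0 ≤ r → ∀ i j,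
      ‖(Delta n Am1 A1 A2 A3 (-r : ℂ) - neutralPart Am1 A1 (-r : ℂ)) i j‖ ≤
        C * (1 + r) * Real.exp (-r * α) := by
  obtain ⟨M, hM⟩ := Finite.exists_le fun p : Fin n × Fin n =>
    ∫ s in Ioo (-1:ℝ) 0, (‖A2 s p.1 p.2‖ + ‖A3 s p.1 p.2‖)
  refine ⟨1 + max M 0, by positivity, fun r hr i j => ?_⟩
  have hexp : 1 ≤ Real.exp (-r * α) := Real.one_le_exp (by nlinarith)
  have hint : ‖∫ s in Ioo (-1:ℝ) 0, Complex.exp (-r * s) * (-r * A2 s i j + A3 s i j)‖ ≤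
      Real.exp (-r * α) * ((1 + r) * max M 0) := by
    refine (norm_setIntegral_exp_mul_le (α := α) hr ?_ ?_).trans ?_
    · exact ((hA2 i j).const_mul _).add (hA3 i j)
    · filter_upwards [hA2v, hA3v] with s h2 h3
      simp [h2, h3]
    gcongr
    calc ∫ s in Ioo (-1:ℝ) 0, ‖-r * A2 s i j + A3 s i j‖
        ≤ ∫ s in Ioo (-1:ℝ) 0, (1 + r) * (‖A2 s i j‖ + ‖A3 s i j‖) := by
          refine integral_mono_of_nonneg (.of_forall fun s => norm_nonneg _)
            (((hA2 i j).norm.add (hA3 i j).norm).const_mul _) (.of_forall fun s => ?_)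
          have := norm_add_le (-r * A2 s i j) (A3 s i j)
          simp only [norm_mul, norm_neg, Complex.norm_real, Real.norm_of_nonneg hr] at this
          nlinarith [norm_nonneg (A2 s i j), norm_nonneg (A3 s i j)]
      _ ≤ (1 + r) * max M 0 := by
          rw [integral_const_mul]
          gcongr
          exact (hM (i, j)).trans (le_max_left _ _)
  rw [Delta_sub_neutralPart_apply]
  calc _ ≤ ‖-(-r : ℂ) * (if i = j then 1 else 0)‖ + ‖∫ s in Ioo (-1:ℝ) 0,
        Complex.exp (-r * s) * (-r * A2 s i j + A3 s i j)‖ := norm_add_le _ _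
    _ ≤ r * Real.exp (-r * α) + Real.exp (-r * α) * ((1 + r) * max M 0) := by
        gcongr
        split_ifs
        · simpa [abs_of_nonneg hr] using le_mul_of_one_le_right hr hexp
        · simp only [mul_zero, norm_zero]
          positivity
    _ ≤ (1 + max M 0) * (1 + r) * Real.exp (-r * α) := by
        nlinarith [le_max_right M 0, Real.exp_pos (-r * α)]

theorem exists_norm_ftwo_neg_le (hn : 1 ≤ n) {α : ℝ} (hα1 : -1 ≤ α) (hα2 : α ≤ 0)
    (hA2 : ∀ i j, Integrable (fun θ => A2 θ i j) (volume.restrict (Ioo (-1:ℝ) 0)))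
    (hA3 : ∀ i j, Integrable (fun θ => A3 θ i j) (volume.restrict (Ioo (-1:ℝ) 0)))
    (hA2v : ∀ᵐ θ ∂(volume.restrict (Ioo (-1:ℝ) α)), A2 θ = 0)
    (hA3v : ∀ᵐ θ ∂(volume.restrict (Ioo (-1:ℝ) α)), A3 θ = 0) :
    ∃ K, 1 ≤ K ∧ ∀ r : ℝ, 0 ≤ r →
      ‖ftwo n Am1 A1 A2 A3 (-r : ℂ)‖ ≤ K * (1 + r) ^ n * Real.exp ((n - 1 - α) * r) := by
  obtain ⟨m, rfl⟩ : ∃ m, n = m + 1 := ⟨n - 1, by omega⟩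
  obtain ⟨C₁, hC₁, hP⟩ := exists_norm_neutralPart_apply_le Am1 A1
  obtain ⟨C₂, hC₂, hQ⟩ :=
    exists_norm_Delta_sub_neutralPart_apply_le Am1 A1 hα2 hA2 hA3 hA2v hA3v
  refine ⟨max 1 ((m + 1).factorial * (m + 1) * C₂ * (C₁ + C₂) ^ m), le_max_left _ _,
    fun r hr => ?_⟩
  set b := C₁ * (1 + r) * Real.exp r
  set d := C₂ * (1 + r) * Real.exp (-r * α)
  have hb : 0 ≤ b := by positivity
  have hd : 0 ≤ d := by positivity
  have hdb : d ≤ C₂ * (1 + r) * Real.exp r := by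
    unfold d
    gcongr
    nlinarith
  rw [ftwo_eq_det_add_sub_det]
  calc _ ≤ (m + 1).factorial * ((b + d) ^ (m + 1) - b ^ (m + 1)) := by
        simpa only [Fintype.card_fin] using Matrix.norm_det_add_sub_det_le (hP r hr) (hQ r hr)
    _ ≤ (m + 1).factorial * (d * (m + 1 : ℕ) * (b + d) ^ m) := by
        gcongr
        exact add_pow_sub_pow_le hb hd m
    _ ≤ (m + 1).factorial * (d * (m + 1 : ℕ) * ((C₁ + C₂) * (1 + r) * Real.exp r) ^ m) := by
        gcongr
        linarith
    _ = (m + 1).factorial * (m + 1) * C₂ * (C₁ + C₂) ^ m * (1 + r) ^ (m + 1) *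
          Real.exp ((↑(m + 1) - 1 - α) * r) := by
        rw [show (↑(m + 1) - 1 - α) * r = -r * α + m * r by push_cast; ring, Real.exp_add,
          Real.exp_nat_mul, mul_pow, mul_pow]
        simp only [d]
        push_cast
        ring
    _ ≤ _ := by gcongr; exact le_max_right _ _

end CharacteristicMatrix

theorem limsup_log_norm_div_le {E : Type*} [SeminormedAddCommGroup E] {f : ℝ → E}
    {K c : ℝ} {m : ℕ} (hK : 1 ≤ K) (hc : 0 ≤ c)
    (hf : ∀ r, 0 ≤ r → ‖f r‖ ≤ K * (1 + r) ^ m * Real.exp (c * r)) :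
    limsup (fun r : ℝ => ((1 / r * Real.log ‖f r‖ : ℝ) : EReal)) atTop ≤ (c : EReal) := by
  set φ : ℝ → ℝ := fun r => Real.log K / r + m * (Real.log (1 + r) / r) + c
  have hlog_div : Tendsto (fun r : ℝ => Real.log (1 + r) / r) atTop (𝓝 0) := by
    have h := (Real.tendsto_pow_log_div_mul_add_atTop 1 (-1) 1 one_ne_zero).comp
      (tendsto_atTop_add_const_left atTop 1 tendsto_id)
    refine h.congr fun r => ?_
    simp
  have hφ : Tendsto φ atTop (𝓝 c) := by
    simpa using ((tendsto_const_nhds.div_atTop tendsto_id).add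
      (hlog_div.const_mul (m : ℝ))).add_const c
  have hle : ∀ᶠ r in atTop, 1 / r * Real.log ‖f r‖ ≤ φ r := by
    filter_upwards [eventually_gt_atTop 0] with r hr
    have hB : 1 ≤ K * (1 + r) ^ m * Real.exp (c * r) :=
      one_le_mul_of_one_le_of_one_le
        (one_le_mul_of_one_le_of_one_le hK (one_le_pow₀ (by linarith)))
        (Real.one_le_exp (by positivity))
    have hlog : Real.log ‖f r‖ ≤ Real.log (K * (1 + r) ^ m * Real.exp (c * r)) := by
      -- `Real.log 0 = 0`, so zeros of `f` are harmless once the bound is at least `1`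
      rcases (norm_nonneg (f r)).eq_or_lt with h0 | hpos
      · rw [← h0, Real.log_zero]
        exact Real.log_nonneg hB
      · exact Real.log_le_log hpos (hf r hr.le)
    rw [Real.log_mul (by positivity) (by positivity), Real.log_mul (by positivity) (by positivity),
      Real.log_pow, Real.log_exp] at hlog
    calc 1 / r * Real.log ‖f r‖ ≤ 1 / r * (Real.log K + m * Real.log (1 + r) + c * r) := by
          gcongr
      _ = φ r := by simp only [φ]; field_simp
  calc limsup (fun r : ℝ => ((1 / r * Real.log ‖f r‖ : ℝ) : EReal)) atTop
      ≤ limsup (fun r => ((φ r : ℝ) : EReal)) atTop :=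
        limsup_le_limsup (hle.mono fun r h => EReal.coe_le_coe_iff.mpr h)
    _ = c := (EReal.tendsto_coe.mpr hφ).limsup_eq

theorem stmt15 (n : ℕ) (hn : 1 ≤ n) (α : ℝ) (hα1 : -1 < α) (hα2 : α ≤ 0)
    (Am1 A1 : Matrix (Fin n) (Fin n) ℂ) (A2 A3 : ℝ → Matrix (Fin n) (Fin n) ℂ)
    (hA2 : ∀ i j, MemLp (fun θ => A2 θ i j) 2 (volume.restrict (Ioo (-1:ℝ) 0)))
    (hA3 : ∀ i j, MemLp (fun θ => A3 θ i j) 2 (volume.restrict (Ioo (-1:ℝ) 0)))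
    (hA2v : ∀ᵐ θ ∂(volume.restrict (Ioo (-1:ℝ) α)), A2 θ = 0)
    (hA3v : ∀ᵐ θ ∂(volume.restrict (Ioo (-1:ℝ) α)), A3 θ = 0) :
    Filter.limsup
        (fun r : ℝ =>
          (((1 / r) * Real.log (‖ftwo n Am1 A1 A2 A3 (-r : ℂ)‖)) : EReal))
        Filter.atTop
      ≤ (((n : ℝ) - 1 - α : ℝ) : EReal) ∧
    Filter.limsup
        (fun r : ℝ =>
          (((1 / r) * Real.log (‖ftwo n Am1 A1 A2 A3 (-r : ℂ)‖)) : EReal))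
        Filter.atTop
      < ((n : ℝ) : EReal) := by
  obtain ⟨K, hK, hbound⟩ := exists_norm_ftwo_neg_le Am1 A1 hn hα1.le hα2
    (fun i j => (hA2 i j).integrable one_le_two) (fun i j => (hA3 i j).integrable one_le_two)
    hA2v hA3v
  have hn' : (1 : ℝ) ≤ n := by exact_mod_cast hn
  have hlimsup := limsup_log_norm_div_le hK (by linarith) hbound
  exact ⟨hlimsup, hlimsup.trans_lt (EReal.coe_lt_coe_iff.mpr (by linarith))⟩
end
end
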